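/- arXiv:1601.06488 — 5 statements merged into one kernel-verified Lean document; each statement's English description precedes it below -/
import Mathlib

section
/- Let $X$ be a compact linearly ordered topological space (with the order topology), $f : X \to \mathbb{R}$ a continuous function, and $\varepsilon > 0$. Then there exists $n \in \mathbb{N}$ such that for all elements $a_1 < b_1 \le a_2 < b_2 \le \dots \le a_n < b_n$ in $X$, there exists $k \le n$ with $|f(a_k) - f(b_k)| < \varepsilon$. -/
open Set Metric Topology

theorem stmt_0 {X : Type*} [LinearOrder X] [TopologicalSpace X] [OrderTopology X]
    [CompactSpace X] (f : X → ℝ) (hf : Continuous f) (ε : ℝ) (hε : 0 < ε) :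
    ∃ n : ℕ, ∀ a b : Fin n → X, (∀ i, a i < b i) →
      (∀ i j : Fin n, i < j → b i ≤ a j) →
      ∃ k : Fin n, |f (a k) - f (b k)| < ε := by
  set U : X → Set X := fun x => ordConnectedComponent (f ⁻¹' ball (f x) (ε / 2)) x with hU
  have hUnhds : ∀ x : X, U x ∈ 𝓝 x := fun x => by
    rw [hU]
    exact ordConnectedComponent_mem_nhds.2
      ((hf.continuousAt).preimage_mem_nhds (ball_mem_nhds _ (by linarith)))
  obtain ⟨t, -, htcov⟩ := isCompact_univ.elim_nhds_subcover U (fun x _ => hUnhds x)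
  refine ⟨t.card + 1, fun a b hab hba => ?_⟩
  have hmem : ∀ k : Fin (t.card + 1), ∃ x ∈ t, a k ∈ U x := by
    intro k
    have := htcov (mem_univ (a k))
    simpa using this
  choose g hg hgU using hmem
  have hcard : Fintype.card {x // x ∈ t} < Fintype.card (Fin (t.card + 1)) := by
    simp [Fintype.card_coe]
  obtain ⟨i, j, hij, heq⟩ :=
    Fintype.exists_ne_map_eq_of_card_lt (fun k : Fin (t.card + 1) => (⟨g k, hg k⟩ : {x // x ∈ t}))
      hcard
  wlog hlt : i < j generalizing i j
  · exact this j i hij.symm heq.symm (hij.lt_or_gt.resolve_left hlt)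
  refine ⟨i, ?_⟩
  have heq' : g i = g j := by simpa using congrArg Subtype.val heq
  have haij : a i ∈ U (g i) := hgU i
  have haj : a j ∈ U (g i) := heq' ▸ hgU j
  have hconn : (U (g i)).OrdConnected := by
    rw [hU]; infer_instance
  have hbi : b i ∈ U (g i) :=
    hconn.out haij haj ⟨(hab i).le, hba i j hlt⟩
  have h1 : f (a i) ∈ ball (f (g i)) (ε / 2) :=
    (ordConnectedComponent_subset haij : a i ∈ f ⁻¹' ball (f (g i)) (ε / 2))
  have h2 : f (b i) ∈ ball (f (g i)) (ε / 2) :=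
    (ordConnectedComponent_subset hbi : b i ∈ f ⁻¹' ball (f (g i)) (ε / 2))
  rw [mem_ball, Real.dist_eq, abs_lt] at h1 h2
  rw [abs_lt]
  constructor <;> linarith [h1.1, h1.2, h2.1, h2.2]
end

section
/- Every compact linearly ordered topological space $Y$ is a co-Namioka space: for every Baire space $X$ and every separately continuous function $f : X \times Y \to \mathbb{R}$, there exists a dense $G_\delta$ set $A \subseteq X$ such that $f$ is jointly continuous at every point of $A \times Y$. -/
set_option linter.unusedSectionVars false
set_option maxHeartbeats 1000000

open Set Topology Filter

section Core

variable {Y : Type*} [LinearOrder Y] [TopologicalSpace Y] [OrderTopology Y] [CompactSpace Y]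

/-- Oscillation of `g` on `s` is at most `e`. -/
def OscLE (g : Y → ℝ) (s : Set Y) (e : ℝ) : Prop :=
  ∀ ⦃a⦄, a ∈ s → ∀ ⦃b⦄, b ∈ s → |g a - g b| ≤ e

lemma OscLE.mono {g : Y → ℝ} {s t : Set Y} {e : ℝ} (hst : s ⊆ t) (h : OscLE g t e) :
    OscLE g s e := fun _ ha _ hb => h (hst ha) (hst hb)

lemma oscLE_empty {g : Y → ℝ} {e : ℝ} {s : Set Y} (hs : s = ∅) : OscLE g s e := by
  intro a ha
  exact (Set.notMem_empty a (hs ▸ ha)).elim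

variable [Nonempty Y]

lemma exists_isLUB' (s : Set Y) (hs : s.Nonempty) : ∃ b, IsLUB s b := by
  obtain ⟨b, -, hb⟩ := (isClosed_closure (s := s)).isCompact.exists_isLUB (hs.closure)
  refine ⟨b, ?_, ?_⟩
  · rw [← upperBounds_closure]; exact hb.1
  · intro c hc; exact hb.2 (by rw [upperBounds_closure]; exact hc)

/-- candidate set for the greedy step -/
def cand (g : Y → ℝ) (e : ℝ) (a : Y) : Set Y := {y | a ≤ y ∧ OscLE g (Set.Ioc a y) e}

lemma cand_self {g : Y → ℝ} {e : ℝ} (a : Y) : a ∈ cand g e a :=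
  ⟨le_rfl, oscLE_empty (Ioc_self a)⟩

/-- The greedy "next point": the lub of all `y ≥ a` such that the oscillation on `(a,y]`
is at most `e`. -/
noncomputable def nxt (g : Y → ℝ) (e : ℝ) (a : Y) : Y :=
  Classical.choose (exists_isLUB' (cand g e a) ⟨a, cand_self a⟩)

lemma nxt_isLUB (g : Y → ℝ) (e : ℝ) (a : Y) : IsLUB (cand g e a) (nxt g e a) :=
  Classical.choose_spec (exists_isLUB' (cand g e a) ⟨a, cand_self a⟩)

lemma le_nxt (g : Y → ℝ) (e : ℝ) (a : Y) : a ≤ nxt g e a :=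
  (nxt_isLUB g e a).1 (cand_self a)

lemma le_nxt_of {g : Y → ℝ} {e : ℝ} {a q : Y} (h1 : a ≤ q) (h2 : OscLE g (Set.Ioc a q) e) :
    q ≤ nxt g e a := (nxt_isLUB g e a).1 ⟨h1, h2⟩

lemma nxt_not_osc {g : Y → ℝ} {e : ℝ} {a y : Y} (hy : nxt g e a < y) :
    ¬ OscLE g (Set.Ioc a y) e := fun h =>
  absurd (le_nxt_of ((le_nxt g e a).trans hy.le) h) (not_le.2 hy)

/-- interval-closedness of the candidate set -/
lemma cand_Icc {g : Y → ℝ} {e : ℝ} {a t : Y} (ht : t ∈ cand g e a) {s : Y} (h1 : a ≤ s)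
    (h2 : s ≤ t) : s ∈ cand g e a := ⟨h1, ht.2.mono (Ioc_subset_Ioc_right h2)⟩

/-- Key closure property: the oscillation bound holds up to `nxt g e a` itself. -/
lemma osc_nxt {g : Y → ℝ} (hg : Continuous g) {e : ℝ} (he : 0 ≤ e) (a : Y) :
    OscLE g (Set.Ioc a (nxt g e a)) e := by
  set b := nxt g e a with hb
  have hlub := nxt_isLUB g e a
  by_cases hbT : b ∈ cand g e a
  · exact hbT.2
  -- b not attained: every point strictly below b and ≥ a is a candidate
  have hint : ∀ w, a ≤ w → w < b → w ∈ cand g e a := by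
    intro w haw hwb
    obtain ⟨t, htc, hwt, -⟩ := hlub.exists_between hwb
    exact cand_Icc htc haw hwt.le
  have hab : a < b := by
    rcases eq_or_lt_of_le (le_nxt g e a) with h | h
    · exact absurd (show b ∈ cand g e a by rw [hb, ← h]; exact cand_self a) hbT
    · exact h
  -- no predecessor of b
  have hnopred : ∀ c, c < b → (Set.Ioo c b).Nonempty := by
    intro c hcb
    by_contra hemp
    rw [Set.not_nonempty_iff_eq_empty] at hemp
    -- then every candidate is ≤ c, hence b ≤ c
    have : ∀ t ∈ cand g e a, t ≤ c := by
      intro t htc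
      by_contra hct
      push_neg at hct
      have htb : t ≤ b := hlub.1 htc
      rcases eq_or_lt_of_le htb with rfl | hlt
      · exact hbT htc
      · have ht' : t ∈ Set.Ioo c b := ⟨hct, hlt⟩
        rw [hemp] at ht'
        exact (Set.notMem_empty t ht').elim
    exact absurd (hlub.2 this) (not_le.2 hcb)
  intro x hx y hy
  have main : ∀ z, a < z → z < b → |g z - g b| ≤ e := by
    intro z haz hzb
    refine le_of_forall_pos_le_add ?_
    intro η hη
    have hmem : {w | |g w - g b| < η} ∈ 𝓝 b := by
      have hc : Continuous fun w => |g w - g b| := (hg.sub continuous_const).abs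
      have h0 : |g b - g b| < η := by simpa using hη
      exact hc.continuousAt.preimage_mem_nhds (Iio_mem_nhds h0)
    obtain ⟨l, hl, hsub⟩ := exists_Ioc_subset_of_mem_nhds hmem ⟨z, hzb⟩
    obtain ⟨w, hw1, hw2⟩ := hnopred (max l z) (max_lt hl hzb)
    have hzw : z ≤ w := (le_max_right l z).trans hw1.le
    have hwc : w ∈ cand g e a := hint w (haz.le.trans hzw) hw2
    have h1 : |g z - g w| ≤ e := hwc.2 ⟨haz, hzw⟩ ⟨haz.trans_le hzw, le_rfl⟩
    have h2 : |g w - g b| < η := hsub ⟨(le_max_left l z).trans_lt hw1, hw2.le⟩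
    calc |g z - g b| ≤ |g z - g w| + |g w - g b| := abs_sub_le _ _ _
      _ ≤ e + η := add_le_add h1 h2.le
  rcases lt_or_eq_of_le hx.2 with hxb | hxb
  · rcases lt_or_eq_of_le hy.2 with hyb | hyb
    · have hmax : max x y ∈ cand g e a := hint _ (le_max_of_le_left hx.1.le) (max_lt hxb hyb)
      exact hmax.2 ⟨hx.1, le_max_left x y⟩ ⟨hy.1, le_max_right x y⟩
    · rw [hyb]; exact main x hx.1 hxb
  · rcases lt_or_eq_of_le hy.2 with hyb | hyb
    · rw [hxb, abs_sub_comm]; exact main y hy.1 hyb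
    · rw [hxb, hyb]; simpa using he

/-- strict progress of the greedy step -/
lemma lt_nxt {g : Y → ℝ} (hg : Continuous g) {e : ℝ} (he : 0 < e) {a : Y}
    (hT : ∃ y, a < y) : a < nxt g e a := by
  by_cases hsucc : ∃ w, a ⋖ w
  · obtain ⟨w, hw⟩ := hsucc
    have hwc : w ∈ cand g e a := by
      refine ⟨hw.1.le, ?_⟩
      intro x hx y hy
      have hx' : x = w := by
        rcases lt_or_eq_of_le hx.2 with h | h
        · have hmem : x ∈ Set.Ioo a w := ⟨hx.1, h⟩
          rw [hw.Ioo_eq] at hmem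
          exact (Set.notMem_empty x hmem).elim
        · exact h
      have hy' : y = w := by
        rcases lt_or_eq_of_le hy.2 with h | h
        · have hmem : y ∈ Set.Ioo a w := ⟨hy.1, h⟩
          rw [hw.Ioo_eq] at hmem
          exact (Set.notMem_empty y hmem).elim
        · exact h
      rw [hx', hy']; simpa using he.le
    exact hw.1.trans_le (le_nxt_of hwc.1 hwc.2)
  · have hmem : {w | |g w - g a| < e / 2} ∈ 𝓝 a := by
      have : Continuous fun w => |g w - g a| := (hg.sub continuous_const).abs
      have h0 : |g a - g a| < e / 2 := by simpa using half_pos he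
      exact this.continuousAt.preimage_mem_nhds (Iio_mem_nhds h0)
    obtain ⟨r, har, hsub⟩ := exists_Ico_subset_of_mem_nhds hmem hT
    obtain ⟨w, hw1, hw2⟩ := exists_lt_lt_of_not_covBy har (fun h => hsucc ⟨r, h⟩)
    have hwc : w ∈ cand g e a := by
      refine ⟨hw1.le, ?_⟩
      intro x hx y hy
      have h1 : |g x - g a| < e / 2 := hsub ⟨hx.1.le, (hx.2.trans_lt hw2)⟩
      have h2 : |g y - g a| < e / 2 := hsub ⟨hy.1.le, (hy.2.trans_lt hw2)⟩
      calc |g x - g y| ≤ |g x - g a| + |g a - g y| := abs_sub_le _ _ _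
        _ ≤ e / 2 + e / 2 := add_le_add h1.le (by rw [abs_sub_comm]; exact h2.le)
        _ = e := add_halves e
    exact hw1.trans_le (le_nxt_of hwc.1 hwc.2)

end Core

section Grd

variable {Y : Type*} [LinearOrder Y] [TopologicalSpace Y] [OrderTopology Y] [CompactSpace Y]
variable [Nonempty Y]

/-- greedy partition sequence starting at `bo` -/
noncomputable def grd (g : Y → ℝ) (e : ℝ) (bo : Y) : ℕ → Y
  | 0 => bo
  | n + 1 => nxt g e (grd g e bo n)

lemma grd_mono_succ (g : Y → ℝ) (e : ℝ) (bo : Y) (n : ℕ) :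
    grd g e bo n ≤ grd g e bo (n + 1) := le_nxt g e _

lemma grd_mono (g : Y → ℝ) (e : ℝ) (bo : Y) : Monotone (grd g e bo) :=
  monotone_nat_of_le_succ (grd_mono_succ g e bo)

lemma grd_osc {g : Y → ℝ} (hg : Continuous g) {e : ℝ} (he : 0 ≤ e) (bo : Y) (n : ℕ) :
    OscLE g (Set.Ioc (grd g e bo n) (grd g e bo (n + 1))) e := osc_nxt hg he _

lemma grd_not_osc {g : Y → ℝ} {e : ℝ} {bo : Y} {n : ℕ} {y : Y}
    (hy : grd g e bo (n + 1) < y) : ¬ OscLE g (Set.Ioc (grd g e bo n) y) e :=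
  nxt_not_osc hy

lemma grd_top {g : Y → ℝ} {e : ℝ} {bo T : Y} (hT : ∀ y, y ≤ T) {n : ℕ}
    (h : grd g e bo n = T) : ∀ m, n ≤ m → grd g e bo m = T := by
  intro m hm
  induction m with
  | zero => exact (Nat.le_zero.1 hm) ▸ h
  | succ k ih =>
    rcases Nat.lt_or_ge n (k + 1) with h1 | h1
    · have hk : grd g e bo k = T := ih (Nat.lt_succ_iff.1 h1)
      refine le_antisymm (hT _) ?_
      calc T = grd g e bo k := hk.symm
        _ ≤ grd g e bo (k + 1) := grd_mono_succ g e bo k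
    · exact (le_antisymm hm h1) ▸ h

lemma grd_dominates {g : Y → ℝ} {e : ℝ} {bo : Y} {q : ℕ → Y} (hq0 : q 0 = bo)
    (hqmono : ∀ i, q i ≤ q (i + 1))
    (hosc : ∀ i, OscLE g (Set.Ioc (q i) (q (i + 1))) e) :
    ∀ k, q k ≤ grd g e bo k := by
  intro k
  induction k with
  | zero => exact hq0.le
  | succ n ih =>
    rcases le_or_gt (q (n + 1)) (grd g e bo n) with h | h
    · exact h.trans (grd_mono_succ g e bo n)
    · refine le_nxt_of h.le ((hosc n).mono (Set.Ioc_subset_Ioc_left ih))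

/-- The creeping lemma: the greedy partition reaches the top in finitely many steps. -/
lemma grd_reach {g : Y → ℝ} (hg : Continuous g) {e : ℝ} (he : 0 < e) (bo : Y) {T : Y}
    (hT : ∀ y, y ≤ T) : ∃ n, grd g e bo n = T := by
  by_contra h
  push_neg at h
  have hlt : ∀ n, grd g e bo n < T := fun n => (hT _).lt_of_ne (h n)
  obtain ⟨lam, hlam⟩ := exists_isLUB' (Set.range (grd g e bo)) ⟨bo, 0, rfl⟩
  have hle : ∀ n, grd g e bo n ≤ lam := fun n => hlam.1 ⟨n, rfl⟩
  by_cases hmem : ∃ j, grd g e bo j = lam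
  · obtain ⟨j, hj⟩ := hmem
    have hstep : grd g e bo j < grd g e bo (j + 1) := lt_nxt hg he ⟨T, hlt j⟩
    rw [hj] at hstep
    exact absurd (hle (j + 1)) (not_le.2 hstep)
  · push_neg at hmem
    have h0 : grd g e bo 0 < lam := (hle 0).lt_of_ne (hmem 0)
    have hmem2 : {w | |g w - g lam| < e / 2} ∈ 𝓝 lam := by
      have hc : Continuous fun w => |g w - g lam| := (hg.sub continuous_const).abs
      have h0' : |g lam - g lam| < e / 2 := by simpa using half_pos he
      exact hc.continuousAt.preimage_mem_nhds (Iio_mem_nhds h0')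
    obtain ⟨l, hl, hsub⟩ := exists_Ioc_subset_of_mem_nhds hmem2 ⟨_, h0⟩
    have hex : ∃ j, l < grd g e bo j := by
      by_contra hc
      push_neg at hc
      refine absurd (hlam.2 ?_) (not_le.2 hl)
      rintro z ⟨j, rfl⟩
      exact hc j
    obtain ⟨j, hj⟩ := hex
    have hjlam : grd g e bo j < lam := (hle j).lt_of_ne (hmem j)
    have hcand : OscLE g (Set.Ioc (grd g e bo j) lam) e := by
      intro x hx y hy
      have h1 : |g x - g lam| < e / 2 := hsub ⟨lt_trans hj hx.1, hx.2⟩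
      have h2 : |g y - g lam| < e / 2 := hsub ⟨lt_trans hj hy.1, hy.2⟩
      calc |g x - g y| ≤ |g x - g lam| + |g lam - g y| := abs_sub_le _ _ _
        _ ≤ e / 2 + e / 2 := add_le_add h1.le (by rw [abs_sub_comm]; exact h2.le)
        _ = e := add_halves e
    have hup : lam ≤ grd g e bo (j + 1) := le_nxt_of (hle j) hcand
    exact hmem (j + 1) (le_antisymm (hle (j + 1)) hup)

end Grd

section Corridor

variable {Y : Type*} [LinearOrder Y] [TopologicalSpace Y] [OrderTopology Y] [CompactSpace Y]
variable [Nonempty Y]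

lemma not_oscLE_witness {g : Y → ℝ} {e : ℝ} {s : Set Y} (h : ¬ OscLE g s e) :
    ∃ x ∈ s, ∃ y ∈ s, e < |g x - g y| := by
  by_contra hc
  push_neg at hc
  exact h fun x hx y hy => hc x hx y hy

/-- Construction of one corridor at a greedy boundary point `p`. -/
lemma corridor {g : Y → ℝ} (hg : Continuous g) {e : ℝ} (he : 0 < e) {p' p w : Y}
    (hpp : p' < p) (hpw : p < w)
    (hosc : OscLE g (Set.Ioc p' p) e) (hmax : ∀ y, p < y → ¬ OscLE g (Set.Ioc p' y) e) :
    ∃ u v, p' < u ∧ u ≤ p ∧ p < v ∧ v ≤ w ∧ e < |g u - g v| ∧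
      (|g u - g v| ≤ 2 * e ∨ (Set.Ico u v).Subsingleton) := by
  by_cases hsucc : ∃ v₀, p ⋖ v₀
  · obtain ⟨v₀, hv₀⟩ := hsucc
    have hv₀w : v₀ ≤ w := by
      by_contra hc
      push_neg at hc
      have : w ∈ Set.Ioo p v₀ := ⟨hpw, hc⟩
      rw [hv₀.Ioo_eq] at this
      exact (Set.notMem_empty w this).elim
    have honly : ∀ z, z ∈ Set.Ioc p' v₀ → p < z → z = v₀ := by
      intro z hz hpz
      rcases lt_or_eq_of_le hz.2 with h | h
      · have : z ∈ Set.Ioo p v₀ := ⟨hpz, h⟩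
        rw [hv₀.Ioo_eq] at this
        exact (Set.notMem_empty z this).elim
      · exact h
    have hsing : (Set.Ico p v₀).Subsingleton := by
      intro x hx y hy
      have hx' : x = p := by
        rcases eq_or_lt_of_le hx.1 with h | h
        · exact h.symm
        · have : x ∈ Set.Ioo p v₀ := ⟨h, hx.2⟩
          rw [hv₀.Ioo_eq] at this
          exact (Set.notMem_empty x this).elim
      have hy' : y = p := by
        rcases eq_or_lt_of_le hy.1 with h | h
        · exact h.symm
        · have : y ∈ Set.Ioo p v₀ := ⟨h, hy.2⟩
          rw [hv₀.Ioo_eq] at this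
          exact (Set.notMem_empty y this).elim
      rw [hx', hy']
    by_cases hJ : e < |g p - g v₀|
    · exact ⟨p, v₀, hpp, le_rfl, hv₀.lt, hv₀w, hJ, Or.inr hsing⟩
    · push_neg at hJ
      obtain ⟨s, hs, t, ht, hst⟩ := not_oscLE_witness (hmax v₀ hv₀.lt)
      rcases le_or_gt s p with hsp | hsp
      · rcases le_or_gt t p with htp | htp
        · exact absurd (hosc ⟨hs.1, hsp⟩ ⟨ht.1, htp⟩) (not_le.2 hst)
        · have ht' : t = v₀ := honly t ht htp
          subst ht'
          refine ⟨s, t, hs.1, hsp, hv₀.lt, hv₀w, hst, Or.inl ?_⟩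
          calc |g s - g t| ≤ |g s - g p| + |g p - g t| := abs_sub_le _ _ _
            _ ≤ e + e := add_le_add (hosc ⟨hs.1, hsp⟩ ⟨hpp, le_rfl⟩) hJ
            _ = 2 * e := (two_mul e).symm
      · have hs' : s = v₀ := honly s hs hsp
        rw [hs'] at hst
        rcases le_or_gt t p with htp | htp
        · refine ⟨t, v₀, ht.1, htp, hv₀.lt, hv₀w, by rw [abs_sub_comm]; exact hst, Or.inl ?_⟩
          rw [abs_sub_comm]
          calc |g v₀ - g t| ≤ |g v₀ - g p| + |g p - g t| := abs_sub_le _ _ _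
            _ ≤ e + e := add_le_add (by rw [abs_sub_comm]; exact hJ) (hosc ⟨hpp, le_rfl⟩ ⟨ht.1, htp⟩)
            _ = 2 * e := (two_mul e).symm
        · have ht' : t = v₀ := honly t ht htp
          rw [ht'] at hst
          simp only [sub_self, abs_zero] at hst
          exact absurd hst (not_lt.2 he.le)
  · -- no successor : continuity case
    have hmem : {z | |g z - g p| < e / 2} ∈ 𝓝 p := by
      have hc : Continuous fun z => |g z - g p| := (hg.sub continuous_const).abs
      have h0 : |g p - g p| < e / 2 := by simpa using half_pos he
      exact hc.continuousAt.preimage_mem_nhds (Iio_mem_nhds h0)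
    obtain ⟨r, hr, hsub⟩ := exists_Ico_subset_of_mem_nhds hmem ⟨w, hpw⟩
    have hmin : p < min r w := lt_min hr hpw
    obtain ⟨vb, hvb1, hvb2⟩ :=
      exists_lt_lt_of_not_covBy hmin (fun h => hsucc ⟨min r w, h⟩)
    have hflat : ∀ z, z ∈ Set.Ioc p vb → |g z - g p| < e / 2 := by
      intro z hz
      exact hsub ⟨(hz.1.le), lt_of_le_of_lt hz.2 (hvb2.trans_le (min_le_left r w))⟩
    have hvbw : vb ≤ w := (hvb2.trans_le (min_le_right r w)).le
    obtain ⟨s, hs, t, ht, hst⟩ := not_oscLE_witness (hmax vb hvb1)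
    rcases le_or_gt s p with hsp | hsp
    · rcases le_or_gt t p with htp | htp
      · exact absurd (hosc ⟨hs.1, hsp⟩ ⟨ht.1, htp⟩) (not_le.2 hst)
      · refine ⟨s, t, hs.1, hsp, htp, ht.2.trans hvbw, hst, Or.inl ?_⟩
        calc |g s - g t| ≤ |g s - g p| + |g p - g t| := abs_sub_le _ _ _
          _ ≤ e + e := by
              refine add_le_add (hosc ⟨hs.1, hsp⟩ ⟨hpp, le_rfl⟩) ?_
              rw [abs_sub_comm]
              exact (hflat t ⟨htp, ht.2⟩).le.trans (by linarith)
          _ = 2 * e := (two_mul e).symm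
    · rcases le_or_gt t p with htp | htp
      · refine ⟨t, s, ht.1, htp, hsp, hs.2.trans hvbw, by rw [abs_sub_comm]; exact hst, Or.inl ?_⟩
        calc |g t - g s| ≤ |g t - g p| + |g p - g s| := abs_sub_le _ _ _
          _ ≤ e + e := by
              refine add_le_add (hosc ⟨ht.1, htp⟩ ⟨hpp, le_rfl⟩) ?_
              rw [abs_sub_comm]
              exact (hflat s ⟨hsp, hs.2⟩).le.trans (by linarith)
          _ = 2 * e := (two_mul e).symm
      · have h1 : |g s - g p| < e / 2 := hflat s ⟨hsp, hs.2⟩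
        have h2 : |g t - g p| < e / 2 := hflat t ⟨htp, ht.2⟩
        have : |g s - g t| < e := by
          calc |g s - g t| ≤ |g s - g p| + |g p - g t| := abs_sub_le _ _ _
            _ < e / 2 + e / 2 := add_lt_add h1 (by rw [abs_sub_comm]; exact h2)
            _ = e := add_halves e
        exact absurd hst (not_lt.2 this.le)

end Corridor

section Assemble

variable {Y : Type*} [LinearOrder Y] [TopologicalSpace Y] [OrderTopology Y] [CompactSpace Y]
variable [Nonempty Y]

lemma corridors_exist {g : Y → ℝ} (hg : Continuous g) {e : ℝ} (he : 0 < e)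
    {p : ℕ → Y} {m : ℕ} {T : Y}
    (hpm : p m = T)
    (hstrict : ∀ i, i < m → p i < p (i + 1))
    (hosc : ∀ i, i < m → OscLE g (Set.Ioc (p i) (p (i + 1))) e)
    (hmax : ∀ i, 1 ≤ i → i ≤ m - 1 → ∀ y, p i < y → ¬ OscLE g (Set.Ioc (p (i - 1)) y) e) :
    ∃ u v : ℕ → Y, u m = T ∧
      ∀ i, 1 ≤ i → i ≤ m - 1 →
        (p (i - 1) < u i ∧ u i ≤ p i ∧ p i < v i ∧ v i ≤ u (i + 1) ∧
         e < |g (u i) - g (v i)| ∧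
         (|g (u i) - g (v i)| ≤ 2 * e ∨ (Set.Ico (u i) (v i)).Subsingleton)) := by
  have aux : ∀ k, k ≤ m - 1 → ∃ u v : ℕ → Y, u m = T ∧
      ∀ i, 1 ≤ i → m - k ≤ i → i ≤ m - 1 →
        (p (i - 1) < u i ∧ u i ≤ p i ∧ p i < v i ∧ v i ≤ u (i + 1) ∧
         e < |g (u i) - g (v i)| ∧
         (|g (u i) - g (v i)| ≤ 2 * e ∨ (Set.Ico (u i) (v i)).Subsingleton)) := by
    intro k
    induction k with
    | zero =>
      intro _
      exact ⟨fun _ => T, fun _ => T, rfl, fun i h1 h2 h3 => absurd (h2.trans h3) (by omega)⟩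
    | succ k ih =>
      intro hk
      obtain ⟨u, v, huT, hprops⟩ := ih (by omega)
      set i₀ := m - (k + 1) with hi₀
      have hi₀1 : 1 ≤ i₀ := by omega
      have hi₀m : i₀ ≤ m - 1 := by omega
      have hm2 : 2 ≤ m := by omega
      have hw : p i₀ < u (i₀ + 1) := by
        rcases Nat.lt_or_ge (i₀ + 1) m with h | h
        · have h' : i₀ + 1 ≤ m - 1 := by omega
          have := (hprops (i₀ + 1) (by omega) (by omega) h').1
          simpa using this
        · have hi₀m' : i₀ + 1 = m := by omega
          rw [hi₀m', huT]
          have := hstrict (m - 1) (by omega)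
          have heq : m - 1 + 1 = m := by omega
          rw [heq] at this
          have hpi : i₀ = m - 1 := by omega
          rw [hpi]
          calc p (m - 1) < p m := this
            _ = T := hpm
      have hpp : p (i₀ - 1) < p i₀ := by
        have := hstrict (i₀ - 1) (by omega)
        have heq : i₀ - 1 + 1 = i₀ := by omega
        rwa [heq] at this
      have hosc' : OscLE g (Set.Ioc (p (i₀ - 1)) (p i₀)) e := by
        have := hosc (i₀ - 1) (by omega)
        have heq : i₀ - 1 + 1 = i₀ := by omega
        rwa [heq] at this
      obtain ⟨u₀, v₀, hc1, hc2, hc3, hc4, hc5, hc6⟩ :=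
        corridor hg he hpp hw hosc' (hmax i₀ hi₀1 hi₀m)
      refine ⟨Function.update u i₀ u₀, Function.update v i₀ v₀, ?_, ?_⟩
      · rw [Function.update_of_ne (by omega) _ u, huT]
      · intro i h1 h2 h3
        rcases eq_or_lt_of_le h2 with heq | hlt
        · have hii : i = i₀ := by omega
          subst hii
          rw [Function.update_self, Function.update_self,
            Function.update_of_ne (by omega) _ u]
          exact ⟨hc1, hc2, hc3, hc4, hc5, hc6⟩
        · have hne : i ≠ i₀ := by omega
          have hne' : i + 1 ≠ i₀ := by omega
          rw [Function.update_of_ne hne _ u, Function.update_of_ne hne _ v,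
            Function.update_of_ne hne' _ u]
          exact hprops i h1 (by omega) h3
  obtain ⟨u, v, huT, hprops⟩ := aux (m - 1) le_rfl
  exact ⟨u, v, huT, fun i h1 h3 => hprops i h1 (by omega) h3⟩

end Assemble

section Trap

variable {Y : Type*} [LinearOrder Y] [TopologicalSpace Y] [OrderTopology Y] [CompactSpace Y]

lemma trap {g : Y → ℝ} {e : ℝ} {bo T : Y} {m k : ℕ} {u v q : ℕ → Y}
    (hT : ∀ y : Y, y ≤ T)
    (hm : 1 ≤ m)
    (hk : k ≤ m) (hq0 : q 0 = bo) (hqk : q k = T)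
    (hqmono : ∀ i, q i ≤ q (i + 1))
    (hosc : ∀ i, OscLE g (Set.Ioc (q i) (q (i + 1))) e)
    (hcor : ∀ i, 1 ≤ i → i ≤ m - 1 → bo < u i ∧ u i < v i ∧ v i ≤ u (i + 1))
    (htrap : ∀ i, 1 ≤ i → i ≤ m - 1 → e < |g (u i) - g (v i)|) :
    ∃ b : ℕ → Y, b 0 = bo ∧ b m = T ∧
      (∀ i, 1 ≤ i → i ≤ m - 1 → b i ∈ Set.Ico (u i) (v i)) ∧
      (∀ i, OscLE g (Set.Ioc (b i) (b (i + 1))) e) := by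
  classical
  rcases eq_or_lt_of_le hm with hm1 | hm2
  · -- m = 1 : no corridors
    rcases Nat.lt_or_ge k 1 with hk0 | hk1
    · have hk0' : k = 0 := by omega
      have hboT : bo = T := by rw [← hq0, ← hqk, hk0']
      refine ⟨fun _ => bo, rfl, by rw [← hm1, hboT], fun i h1 h2 => absurd (h1.trans h2) (by omega), ?_⟩
      intro i
      exact oscLE_empty (Set.Ioc_self bo)
    · have hk1' : k = 1 := by omega
      refine ⟨q, hq0, by rw [← hm1, ← hk1', hqk], fun i h1 h2 => absurd (h1.trans h2) (by omega), hosc⟩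
  · -- m ≥ 2
    have hQmono : Monotone q := monotone_nat_of_le_succ hqmono
    have hJex : ∀ i, ∃ j, 1 ≤ i → i ≤ m - 1 →
        (1 ≤ j ∧ j < k ∧ q j ∈ Set.Ico (u i) (v i)) := by
      intro i
      by_cases hi : 1 ≤ i ∧ i ≤ m - 1
      · obtain ⟨h1, h2⟩ := hi
        obtain ⟨hui, huv, -⟩ := hcor i h1 h2
        obtain ⟨j₀, hj₀def⟩ : ∃ j₀, j₀ = Nat.findGreatest (fun j => q j < u i) k := ⟨_, rfl⟩
        have hQ0 : q 0 < u i := by rw [hq0]; exact hui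
        have hj₀P : q j₀ < u i := by
          rw [hj₀def]
          exact Nat.findGreatest_spec (P := fun j => q j < u i) (Nat.zero_le k) hQ0
        have hj₀k : j₀ ≤ k := by rw [hj₀def]; exact Nat.findGreatest_le k
        have hj₀lt : j₀ < k := by
          rcases eq_or_lt_of_le hj₀k with h | h
          · rw [h, hqk] at hj₀P
            exact absurd (hT (u i)) (not_le.2 hj₀P)
          · exact h
        have hnext : ¬ (q (j₀ + 1) < u i) :=
          Nat.findGreatest_is_greatest (P := fun j => q j < u i) (n := k)
            (hj₀def ▸ Nat.lt_succ_self j₀) (by omega)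
        by_cases hv : q (j₀ + 1) < v i
        · refine ⟨j₀ + 1, fun _ _ => ⟨by omega, ?_, not_lt.1 hnext, hv⟩⟩
          rcases eq_or_lt_of_le (show j₀ + 1 ≤ k by omega) with h | h
          · rw [h, hqk] at hv
            exact absurd (hT (v i)) (not_le.2 hv)
          · exact h
        · exfalso
          have h1' : u i ∈ Set.Ioc (q j₀) (q (j₀ + 1)) := ⟨hj₀P, not_lt.1 hnext⟩
          have h2' : v i ∈ Set.Ioc (q j₀) (q (j₀ + 1)) :=
            ⟨hj₀P.trans huv, not_lt.1 hv⟩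
          exact absurd (hosc j₀ h1' h2') (not_le.2 (htrap i h1 h2))
      · exact ⟨0, fun h1 h2 => absurd ⟨h1, h2⟩ hi⟩
    choose J hJ using hJex
    have hJadj : ∀ i, 1 ≤ i → i + 1 ≤ m - 1 → J i < J (i + 1) := by
      intro i h1 h2
      have hi2 : i ≤ m - 1 := by omega
      obtain ⟨-, -, hmem1⟩ := hJ i h1 hi2
      obtain ⟨-, -, hmem2⟩ := hJ (i + 1) (by omega) h2
      obtain ⟨-, -, hch⟩ := hcor i h1 hi2
      have hlt : q (J i) < q (J (i + 1)) :=
        lt_of_lt_of_le hmem1.2 (hch.trans hmem2.1)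
      by_contra hc
      push_neg at hc
      exact absurd (hQmono hc) (not_le.2 hlt)
    have hJge : ∀ i, 1 ≤ i → i ≤ m - 1 → i ≤ J i := by
      intro i
      induction i with
      | zero => omega
      | succ n ih =>
        intro _ h2
        rcases Nat.lt_or_ge n 1 with hn | hn
        · have : n = 0 := by omega
          subst this
          exact (hJ 1 le_rfl h2).1
        · have h3 : n ≤ m - 1 := by omega
          have := ih hn (by omega)
          have := hJadj n hn h2
          omega
    have hJle : ∀ d i, 1 ≤ i → i + d ≤ m - 1 → J i + d ≤ J (i + d) := by
      intro d
      induction d with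
      | zero => intro i _ _; simp
      | succ n ih =>
        intro i h1 h2
        have ha := ih i h1 (by omega)
        have hb := hJadj (i + n) (by omega) (by omega)
        have heq : i + (n + 1) = (i + n) + 1 := by omega
        rw [heq]
        omega
    have hkm : k = m := by
      have h1 := hJge (m - 1) (by omega) le_rfl
      have h2 := (hJ (m - 1) (by omega) le_rfl).2.1
      omega
    have hJeq : ∀ i, 1 ≤ i → i ≤ m - 1 → J i = i := by
      intro i h1 h2
      have hge := hJge i h1 h2
      have := hJle (m - 1 - i) i h1 (by omega)
      have heq : i + (m - 1 - i) = m - 1 := by omega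
      rw [heq] at this
      have h2' := (hJ (m - 1) (by omega) le_rfl).2.1
      omega
    refine ⟨q, hq0, by rw [← hkm, hqk], ?_, hosc⟩
    intro i h1 h2
    have := (hJ i h1 h2).2.2
    rwa [hJeq i h1 h2] at this
end Trap

section Pair

variable {Y : Type*} [LinearOrder Y] [TopologicalSpace Y] [OrderTopology Y] [CompactSpace Y]

lemma cross_bound {G G' h : Y → ℝ} {e d : ℝ} {ui vi Bprev Bi B'i B'next y : Y}
    (hoscG : OscLE G (Set.Ioc Bprev Bi) e)
    (hoscG' : OscLE G' (Set.Ioc B'i B'next) e)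
    (hBu : ui ≤ Bi) (hBv : Bi < vi)
    (hB'u : ui ≤ B'i) (hB'v : B'i < vi)
    (hprev : Bprev < ui)
    (hnext : vi ≤ B'next)
    (hy1 : B'i < y) (hy2 : y ≤ Bi)
    (hpu : |G ui - h ui| ≤ d) (hpu' : |G' ui - h ui| ≤ d)
    (hpv' : |G' vi - h vi| ≤ d)
    (hw : |h ui - h vi| ≤ 2 * e ∨ (Set.Ico ui vi).Subsingleton) :
    |G y - G' y| ≤ 4 * e + 4 * d := by
  rcases hw with hw | hsing
  · have m1 : y ∈ Set.Ioc Bprev Bi := ⟨lt_trans (lt_of_lt_of_le hprev hB'u) hy1, hy2⟩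
    have m2 : ui ∈ Set.Ioc Bprev Bi := ⟨hprev, hBu⟩
    have m3 : y ∈ Set.Ioc B'i B'next := ⟨hy1, le_trans hy2 (le_trans hBv.le hnext)⟩
    have m4 : vi ∈ Set.Ioc B'i B'next := ⟨hB'v, hnext⟩
    have h1 : |G y - G ui| ≤ e := hoscG m1 m2
    have h2 : |G ui - G' ui| ≤ 2 * d := by
      calc |G ui - G' ui| ≤ |G ui - h ui| + |h ui - G' ui| := abs_sub_le _ _ _
        _ ≤ d + d := add_le_add hpu (by rw [abs_sub_comm]; exact hpu')
        _ = 2 * d := by ring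
    have h3 : |G' ui - G' vi| ≤ 2 * e + 2 * d := by
      calc |G' ui - G' vi| ≤ |G' ui - h ui| + |h ui - G' vi| := abs_sub_le _ _ _
        _ ≤ |G' ui - h ui| + (|h ui - h vi| + |h vi - G' vi|) :=
            add_le_add_right (abs_sub_le _ _ _) _
        _ ≤ d + (2 * e + d) :=
            add_le_add hpu' (add_le_add hw (by rw [abs_sub_comm]; exact hpv'))
        _ = 2 * e + 2 * d := by ring
    have h4 : |G' vi - G' y| ≤ e := hoscG' m4 m3
    calc |G y - G' y| ≤ |G y - G ui| + |G ui - G' y| := abs_sub_le _ _ _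
      _ ≤ |G y - G ui| + (|G ui - G' vi| + |G' vi - G' y|) :=
          add_le_add_right (abs_sub_le _ _ _) _
      _ ≤ |G y - G ui| + ((|G ui - G' ui| + |G' ui - G' vi|) + |G' vi - G' y|) :=
          add_le_add_right (add_le_add_left (abs_sub_le _ _ _) _) _
      _ ≤ e + ((2 * d + (2 * e + 2 * d)) + e) :=
          add_le_add h1 (add_le_add (add_le_add h2 h3) h4)
      _ = 4 * e + 4 * d := by ring
  · exfalso
    have heq : Bi = B'i := hsing ⟨hBu, hBv⟩ ⟨hB'u, hB'v⟩
    rw [heq] at hy2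
    exact absurd hy2 (not_le.2 hy1)

lemma pair_bound {g₁ g₂ h : Y → ℝ} {e d : ℝ} {bo T : Y} {m : ℕ} {u v b₁ b₂ : ℕ → Y}
    (he : 0 ≤ e) (hd : 0 ≤ d)
    (hbo : ∀ y : Y, bo ≤ y) (hT : ∀ y : Y, y ≤ T)
    (hm : 1 ≤ m)
    (hbu : 2 ≤ m → bo < u 1)
    (hchain : ∀ i, 1 ≤ i → i ≤ m - 1 → v i ≤ u (i + 1))
    (hw : ∀ i, 1 ≤ i → i ≤ m - 1 →
      (|h (u i) - h (v i)| ≤ 2 * e ∨ (Set.Ico (u i) (v i)).Subsingleton))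
    (hpu : ∀ i, 1 ≤ i → i ≤ m - 1 → |g₁ (u i) - h (u i)| ≤ d ∧ |g₂ (u i) - h (u i)| ≤ d)
    (hpv : ∀ i, 1 ≤ i → i ≤ m - 1 → |g₁ (v i) - h (v i)| ≤ d ∧ |g₂ (v i) - h (v i)| ≤ d)
    (hpb : |g₁ bo - h bo| ≤ d ∧ |g₂ bo - h bo| ≤ d)
    (hpT : |g₁ T - h T| ≤ d ∧ |g₂ T - h T| ≤ d)
    (hb10 : b₁ 0 = bo) (hb1m : b₁ m = T)
    (hmem1 : ∀ i, 1 ≤ i → i ≤ m - 1 → b₁ i ∈ Set.Ico (u i) (v i))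
    (hosc1 : ∀ i, OscLE g₁ (Set.Ioc (b₁ i) (b₁ (i + 1))) e)
    (hb20 : b₂ 0 = bo) (hb2m : b₂ m = T)
    (hmem2 : ∀ i, 1 ≤ i → i ≤ m - 1 → b₂ i ∈ Set.Ico (u i) (v i))
    (hosc2 : ∀ i, OscLE g₂ (Set.Ioc (b₂ i) (b₂ (i + 1))) e) :
    ∀ y, |g₁ y - g₂ y| ≤ 4 * e + 4 * d := by
  classical
  -- structural facts about a boundary sequence
  have bfacts : ∀ (B : ℕ → Y), B 0 = bo → B m = T →
      (∀ i, 1 ≤ i → i ≤ m - 1 → B i ∈ Set.Ico (u i) (v i)) →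
      (∀ i, 1 ≤ i → i ≤ m - 1 → B (i - 1) < u i) ∧
      (∀ i, 1 ≤ i → i ≤ m - 1 → v i ≤ B (i + 1)) ∧
      (∀ a c, a ≤ c → c ≤ m → B a ≤ B c) := by
    intro B hB0 hBm hmem
    have hprev : ∀ i, 1 ≤ i → i ≤ m - 1 → B (i - 1) < u i := by
      intro i h1 h2
      rcases eq_or_lt_of_le h1 with h | h
      · rw [← h]
        simpa [hB0] using hbu (by omega)
      · have h1' : 1 ≤ i - 1 := by omega
        have h2' : i - 1 ≤ m - 1 := by omega
        have hBlt : B (i - 1) < v (i - 1) := (hmem _ h1' h2').2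
        have hvu : v (i - 1) ≤ u (i - 1 + 1) := hchain _ h1' h2'
        have heq : i - 1 + 1 = i := by omega
        rw [heq] at hvu
        exact lt_of_lt_of_le hBlt hvu
    have hnext : ∀ i, 1 ≤ i → i ≤ m - 1 → v i ≤ B (i + 1) := by
      intro i h1 h2
      rcases Nat.lt_or_ge (i + 1) m with hlt | hge
      · exact le_trans (hchain i h1 h2) (hmem (i + 1) (by omega) (by omega)).1
      · have heq : i + 1 = m := by omega
        rw [heq, hBm]
        exact hT _
    have hstep : ∀ j, j < m → B j ≤ B (j + 1) := by
      intro j hj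
      rcases Nat.lt_or_ge j 1 with h0 | h1
      · have hj0 : j = 0 := by omega
        subst hj0
        rw [hB0]
        exact hbo _
      · have h2 : j ≤ m - 1 := by omega
        exact le_trans (hmem j h1 h2).2.le (hnext j h1 h2)
    have hmono : ∀ a c, a ≤ c → c ≤ m → B a ≤ B c := by
      intro a c hac hcm
      obtain ⟨t, rfl⟩ := Nat.exists_eq_add_of_le hac
      clear hac
      induction t with
      | zero => simp
      | succ n ih =>
        have ha := ih (by omega)
        have hb := hstep (a + n) (by omega)
        have heq : a + (n + 1) = a + n + 1 := by omega
        rw [heq]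
        exact le_trans ha hb
    exact ⟨hprev, hnext, hmono⟩
  obtain ⟨hprev1, hnext1, hmono1⟩ := bfacts b₁ hb10 hb1m hmem1
  obtain ⟨hprev2, hnext2, hmono2⟩ := bfacts b₂ hb20 hb2m hmem2
  intro y
  rcases eq_or_lt_of_le (hbo y) with hy0 | hy0
  · rw [← hy0]
    calc |g₁ bo - g₂ bo| ≤ |g₁ bo - h bo| + |h bo - g₂ bo| := abs_sub_le _ _ _
      _ ≤ d + d := add_le_add hpb.1 (by rw [abs_sub_comm]; exact hpb.2)
      _ ≤ 4 * e + 4 * d := by linarith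
  · -- locate the piece of y for a boundary sequence
    have hloc : ∀ (B : ℕ → Y), B 0 = bo → B m = T →
        ∃ i, i < m ∧ B i < y ∧ y ≤ B (i + 1) := by
      intro B hB0 hBm
      obtain ⟨i₀, hi₀def⟩ : ∃ i₀, i₀ = Nat.findGreatest (fun j => B j < y) m := ⟨_, rfl⟩
      have hP0 : B 0 < y := by rw [hB0]; exact hy0
      have hPi : B i₀ < y := by
        rw [hi₀def]
        exact Nat.findGreatest_spec (P := fun j => B j < y) (Nat.zero_le m) hP0
      have him : i₀ ≤ m := by rw [hi₀def]; exact Nat.findGreatest_le m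
      have hiltm : i₀ < m := by
        rcases eq_or_lt_of_le him with hh | hh
        · exfalso
          rw [hh, hBm] at hPi
          exact absurd (hT y) (not_le.2 hPi)
        · exact hh
      have hnx : y ≤ B (i₀ + 1) := by
        have hgen : ¬ (B (Nat.findGreatest (fun j => B j < y) m + 1) < y) := by
          have := Nat.findGreatest_is_greatest (P := fun j => B j < y) (n := m)
            (k := Nat.findGreatest (fun j => B j < y) m + 1) (Nat.lt_succ_self _)
            (by omega)
          simpa using this
        rw [hi₀def]
        exact not_lt.1 hgen
      exact ⟨i₀, hiltm, hPi, hnx⟩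
    obtain ⟨i₁, hi₁m, hi₁lt, hi₁le⟩ := hloc b₁ hb10 hb1m
    obtain ⟨i₂, hi₂m, hi₂lt, hi₂le⟩ := hloc b₂ hb20 hb2m
    rcases lt_trichotomy i₁ i₂ with hlt | heq | hgt
    · -- crossing : b₂ i₂ < y ≤ b₁ i₂
      have h1r : 1 ≤ i₂ := by omega
      have h2r : i₂ ≤ m - 1 := by omega
      have hyB1 : y ≤ b₁ i₂ := le_trans hi₁le (hmono1 (i₁ + 1) i₂ (by omega) (by omega))
      have hoscG : OscLE g₁ (Set.Ioc (b₁ (i₂ - 1)) (b₁ i₂)) e := by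
        have := hosc1 (i₂ - 1)
        have heq2 : i₂ - 1 + 1 = i₂ := by omega
        rwa [heq2] at this
      exact cross_bound hoscG (hosc2 i₂) (hmem1 i₂ h1r h2r).1 (hmem1 i₂ h1r h2r).2
        (hmem2 i₂ h1r h2r).1 (hmem2 i₂ h1r h2r).2 (hprev1 i₂ h1r h2r) (hnext2 i₂ h1r h2r)
        hi₂lt hyB1 (hpu i₂ h1r h2r).1 (hpu i₂ h1r h2r).2 (hpv i₂ h1r h2r).2 (hw i₂ h1r h2r)
    · -- same piece
      subst heq
      have hyin1 : y ∈ Set.Ioc (b₁ i₁) (b₁ (i₁ + 1)) := ⟨hi₁lt, hi₁le⟩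
      have hyin2 : y ∈ Set.Ioc (b₂ i₁) (b₂ (i₁ + 1)) := ⟨hi₂lt, hi₂le⟩
      have same : ∀ a : Y, a ∈ Set.Ioc (b₁ i₁) (b₁ (i₁ + 1)) →
          a ∈ Set.Ioc (b₂ i₁) (b₂ (i₁ + 1)) →
          |g₁ a - h a| ≤ d → |g₂ a - h a| ≤ d → |g₁ y - g₂ y| ≤ 4 * e + 4 * d := by
        intro a ha1 ha2 hp1 hp2
        have k1 : |g₁ y - g₁ a| ≤ e := hosc1 i₁ hyin1 ha1
        have k2 : |g₂ a - g₂ y| ≤ e := hosc2 i₁ ha2 hyin2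
        have k3 : |g₁ a - g₂ a| ≤ 2 * d := by
          calc |g₁ a - g₂ a| ≤ |g₁ a - h a| + |h a - g₂ a| := abs_sub_le _ _ _
            _ ≤ d + d := add_le_add hp1 (by rw [abs_sub_comm]; exact hp2)
            _ = 2 * d := by ring
        calc |g₁ y - g₂ y| ≤ |g₁ y - g₁ a| + |g₁ a - g₂ y| := abs_sub_le _ _ _
          _ ≤ |g₁ y - g₁ a| + (|g₁ a - g₂ a| + |g₂ a - g₂ y|) :=
              add_le_add_right (abs_sub_le _ _ _) _
          _ ≤ e + (2 * d + e) := add_le_add k1 (add_le_add k3 k2)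
          _ ≤ 4 * e + 4 * d := by linarith
      rcases Nat.lt_or_ge i₁ 1 with h0 | h1
      · have hi0 : i₁ = 0 := by omega
        subst hi0
        rcases eq_or_lt_of_le hm with hm1 | hm2
        · -- m = 1 : anchor T
          have hb11 : b₁ 1 = T := by rw [← hm1] at hb1m; exact hb1m
          have hb21 : b₂ 1 = T := by rw [← hm1] at hb2m; exact hb2m
          refine same T ⟨?_, hb11.ge⟩ ⟨?_, hb21.ge⟩ hpT.1 hpT.2
          · rw [hb10]; exact lt_of_lt_of_le hy0 (hT y)
          · rw [hb20]; exact lt_of_lt_of_le hy0 (hT y)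
        · -- m ≥ 2 : anchor u 1
          have hu1 := hbu hm2
          refine same (u 1) ⟨?_, (hmem1 1 le_rfl (by omega)).1⟩
            ⟨?_, (hmem2 1 le_rfl (by omega)).1⟩ (hpu 1 le_rfl (by omega)).1
            (hpu 1 le_rfl (by omega)).2
          · rw [hb10]; exact hu1
          · rw [hb20]; exact hu1
      · -- i₁ ≥ 1 : anchor v i₁
        have h2 : i₁ ≤ m - 1 := by omega
        exact same (v i₁) ⟨(hmem1 i₁ h1 h2).2, hnext1 i₁ h1 h2⟩
          ⟨(hmem2 i₁ h1 h2).2, hnext2 i₁ h1 h2⟩ (hpv i₁ h1 h2).1 (hpv i₁ h1 h2).2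
    · -- crossing, symmetric : b₁ i₁ < y ≤ b₂ i₁
      have h1r : 1 ≤ i₁ := by omega
      have h2r : i₁ ≤ m - 1 := by omega
      have hyB2 : y ≤ b₂ i₁ := le_trans hi₂le (hmono2 (i₂ + 1) i₁ (by omega) (by omega))
      have hoscG : OscLE g₂ (Set.Ioc (b₂ (i₁ - 1)) (b₂ i₁)) e := by
        have := hosc2 (i₁ - 1)
        have heq2 : i₁ - 1 + 1 = i₁ := by omega
        rwa [heq2] at this
      rw [abs_sub_comm]
      exact cross_bound hoscG (hosc1 i₁) (hmem2 i₁ h1r h2r).1 (hmem2 i₁ h1r h2r).2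
        (hmem1 i₁ h1r h2r).1 (hmem1 i₁ h1r h2r).2 (hprev2 i₁ h1r h2r) (hnext1 i₁ h1r h2r)
        hi₁lt hyB2 (hpu i₁ h1r h2r).2 (hpu i₁ h1r h2r).1 (hpv i₁ h1r h2r).1
        (hw i₁ h1r h2r)

end Pair

section Main

variable {X : Type*} [TopologicalSpace X] [BaireSpace X]
variable {Y : Type*} [LinearOrder Y] [TopologicalSpace Y] [OrderTopology Y] [CompactSpace Y]

lemma dense_good [Nonempty Y] (f : X → Y → ℝ) (hfx : ∀ x, Continuous (f x))
    (hfy : ∀ y, Continuous fun x => f x y) {ε : ℝ} (hε : 0 < ε) :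
    Dense {x | ∃ U, IsOpen U ∧ x ∈ U ∧ ∀ x₁ ∈ U, ∀ x₂ ∈ U, ∀ y, |f x₁ y - f x₂ y| ≤ ε} := by
  classical
  obtain ⟨bo, hbo'⟩ := isCompact_univ.exists_isLeast (Set.univ_nonempty (α := Y))
  obtain ⟨T, hT'⟩ := isCompact_univ.exists_isGreatest (Set.univ_nonempty (α := Y))
  have hbo : ∀ y : Y, bo ≤ y := fun y => hbo'.2 (Set.mem_univ y)
  have hT : ∀ y : Y, y ≤ T := fun y => hT'.2 (Set.mem_univ y)
  set e := ε / 5 with he_def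
  set d := ε / 20 with hd_def
  have he : 0 < e := by positivity
  have hd : 0 < d := by positivity
  have hed : 4 * e + 4 * d = ε := by rw [he_def, hd_def]; ring
  rw [dense_iff_inter_open]
  intro W hW hWne
  -- Baire decomposition by greedy partition length
  set E : ℕ → Set X := fun n => {x | x ∈ W ∧ grd (f x) e bo n = T} with hE_def
  set C : ℕ → Set X := fun n => closure (E n) ∪ Wᶜ with hC_def
  have hCclosed : ∀ n, IsClosed (C n) := fun n => isClosed_closure.union hW.isClosed_compl
  have hCcov : ⋃ n, C n = Set.univ := by
    apply Set.eq_univ_of_forall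
    intro x
    by_cases hxW : x ∈ W
    · obtain ⟨n, hn⟩ := grd_reach (hfx x) he bo hT
      exact Set.mem_iUnion.2 ⟨n, Or.inl (subset_closure ⟨hxW, hn⟩)⟩
    · exact Set.mem_iUnion.2 ⟨0, Or.inr hxW⟩
  have hdense := dense_iUnion_interior_of_closed hCclosed hCcov
  obtain ⟨z, hzW, hzI⟩ := hdense.inter_open_nonempty W hW hWne
  obtain ⟨n, hzn⟩ := Set.mem_iUnion.1 hzI
  set V : Set X := W ∩ interior (C n) with hV_def
  have hVopen : IsOpen V := hW.inter isOpen_interior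
  have hzV : z ∈ V := ⟨hzW, hzn⟩
  have hVE : V ⊆ closure (E n) := by
    rintro x ⟨hxW, hxI⟩
    rcases interior_subset hxI with h | h
    · exact h
    · exact absurd hxW h
  -- size functions
  set sz : X → ℕ := fun x => Nat.find (grd_reach (hfx x) he bo hT) with hsz_def
  have hsz_spec : ∀ x, grd (f x) e bo (sz x) = T := fun x =>
    Nat.find_spec (grd_reach (hfx x) he bo hT)
  have hsz_min : ∀ x k, grd (f x) e bo k = T → sz x ≤ k := fun x k hk =>
    Nat.find_min' (grd_reach (hfx x) he bo hT) hk
  set sz' : X → ℕ := fun x => max 1 (sz x) with hsz'_def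
  have hsz'_spec : ∀ x, grd (f x) e bo (sz' x) = T := fun x =>
    grd_top hT (hsz_spec x) _ (le_max_right _ _)
  have hsz'_le : ∀ x ∈ E n, sz' x ≤ n + 1 := by
    intro x hx
    have h' : sz x ≤ n := hsz_min x n hx.2
    exact max_le (by omega) (by omega)
  -- choose a member of maximal greedy length
  obtain ⟨x', hx'V, hx'E⟩ : ∃ x', x' ∈ V ∧ x' ∈ E n := by
    obtain ⟨x', hx'⟩ := (mem_closure_iff.1 (hVE hzV)) V hVopen hzV
    exact ⟨x', hx'.1, hx'.2⟩
  set P : ℕ → Prop := fun k => ∃ x, (x ∈ V ∧ x ∈ E n) ∧ sz' x = k with hP_def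
  set m : ℕ := Nat.findGreatest P (n + 1) with hm_def
  have hm1 : 1 ≤ m := by
    have h1 : sz' x' ≤ n + 1 := hsz'_le x' hx'E
    have h2 : P (sz' x') := ⟨x', ⟨hx'V, hx'E⟩, rfl⟩
    have := Nat.le_findGreatest h1 h2
    have h3 : 1 ≤ sz' x' := le_max_left _ _
    omega
  obtain ⟨xs, hxsVE, hxs_sz⟩ : P m := by
    have h1 : sz' x' ≤ n + 1 := hsz'_le x' hx'E
    have h2 : P (sz' x') := ⟨x', ⟨hx'V, hx'E⟩, rfl⟩
    exact Nat.findGreatest_spec h1 h2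
  have hszle : ∀ x, x ∈ V → x ∈ E n → sz' x ≤ m := by
    intro x h1 h2
    exact Nat.le_findGreatest (hsz'_le x h2) ⟨x, ⟨h1, h2⟩, rfl⟩
  set h : Y → ℝ := f xs with hh_def
  set p : ℕ → Y := grd h e bo with hp_def
  have hpm : p m = T := by rw [hp_def, hh_def, ← hxs_sz]; exact hsz'_spec xs
  have hpneT : ∀ i, 1 ≤ i → i ≤ m - 1 → p i ≠ T := by
    intro i h1 h2 hiT
    have ha : sz xs ≤ i := hsz_min xs i hiT
    have h3 : sz' xs ≤ i := max_le h1 ha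
    rw [hxs_sz] at h3
    omega
  have hosc_p : ∀ i, OscLE h (Set.Ioc (p i) (p (i + 1))) e := fun i =>
    grd_osc (hfx xs) he.le bo i
  have hmax_p : ∀ i, 1 ≤ i → i ≤ m - 1 → ∀ y, p i < y →
      ¬ OscLE h (Set.Ioc (p (i - 1)) y) e := by
    intro i h1 h2 y hy
    have heqi : i - 1 + 1 = i := by omega
    have : p (i - 1 + 1) < y := by rwa [heqi]
    exact nxt_not_osc this
  -- strictness for m ≥ 2
  have hstrict : 2 ≤ m → ∀ i, i < m → p i < p (i + 1) := by
    intro hm2 i hi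
    have hboT : bo < T := by
      by_contra hc
      push_neg at hc
      have hbT : bo = T := le_antisymm (hbo T) hc
      have h1 : grd (f xs) e bo 1 = T := by
        refine le_antisymm (hT _) ?_
        calc T = bo := hbT.symm
          _ ≤ grd (f xs) e bo 1 := le_nxt (f xs) e bo
      have ha : sz xs ≤ 1 := hsz_min xs 1 h1
      have h3 : sz' xs ≤ 1 := max_le le_rfl ha
      rw [hxs_sz] at h3
      omega
    have hpiT : p i < T := by
      rcases Nat.lt_or_ge i 1 with h0 | h1
      · have : i = 0 := by omega
        rw [this]
        exact hboT
      · exact lt_of_le_of_ne (hT _) (hpneT i h1 (by omega))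
    exact lt_nxt (hfx xs) he ⟨T, hpiT⟩
  -- corridors
  obtain ⟨u, v, huT, hbu, Hcorr⟩ :
      ∃ u v : ℕ → Y, u m = T ∧ (2 ≤ m → bo < u 1) ∧
        ∀ i, 1 ≤ i → i ≤ m - 1 →
          (bo < u i ∧ u i < v i ∧ v i ≤ u (i + 1) ∧
           u i ≤ p i ∧ p i < v i ∧
           e < |h (u i) - h (v i)| ∧
           (|h (u i) - h (v i)| ≤ 2 * e ∨ (Set.Ico (u i) (v i)).Subsingleton)) := by
    rcases eq_or_lt_of_le hm1 with hm1' | hm2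
    · exact ⟨fun _ => T, fun _ => T, rfl, by omega, fun i h1 h2 => by omega⟩
    · have hm2' : 2 ≤ m := hm2
      obtain ⟨u, v, huT, hprops⟩ :=
        corridors_exist (hfx xs) he hpm (hstrict hm2') (fun i _ => hosc_p i) hmax_p
      refine ⟨u, v, huT, ?_, ?_⟩
      · intro _
        have h0 := (hprops 1 le_rfl (by omega)).1
        have hpe : p (1 - 1) = bo := rfl
        rwa [hpe] at h0
      · intro i h1 h2
        obtain ⟨c1, c2, c3, c4, c5, c6⟩ := hprops i h1 h2
        exact ⟨lt_of_le_of_lt (hbo _) c1, lt_of_le_of_lt c2 c3, c4, c2, c3, c5, c6⟩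
  -- the pinned open slice
  set V' : Set X := V ∩ ({x | |f x bo - h bo| < d} ∩ {x | |f x T - h T| < d}) ∩
      ⋂ i ∈ Finset.Icc 1 (m - 1),
        ({x | |f x (u i) - h (u i)| < d} ∩ {x | |f x (v i) - h (v i)| < d} ∩
         {x | e < |f x (u i) - f x (v i)|}) with hV'_def
  have hopen_pin : ∀ (t : Y) (c : ℝ), IsOpen {x : X | |f x t - c| < d} := by
    intro t c
    have : Continuous fun x : X => |f x t - c| := ((hfy t).sub continuous_const).abs
    exact isOpen_lt this continuous_const
  have hV'open : IsOpen V' := by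
    refine ((hVopen.inter ((hopen_pin bo (h bo)).inter (hopen_pin T (h T))))).inter ?_
    refine isOpen_biInter_finset ?_
    intro i _
    refine ((hopen_pin (u i) (h (u i))).inter (hopen_pin (v i) (h (v i)))).inter ?_
    exact isOpen_lt continuous_const (((hfy (u i)).sub (hfy (v i))).abs)
  have hxsV' : xs ∈ V' := by
    refine ⟨⟨hxsVE.1, ?_, ?_⟩, ?_⟩
    · simp [hh_def, hd]
    · simp [hh_def, hd]
    · simp only [Set.mem_iInter]
      intro i hi
      simp only [Finset.mem_Icc] at hi
      refine ⟨⟨?_, ?_⟩, ?_⟩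
      · simp [hh_def, hd]
      · simp [hh_def, hd]
      · exact (Hcorr i hi.1 hi.2).2.2.2.2.2.1
  -- members of the slice admit trapped partitions
  have hmember : ∀ x, x ∈ V' → x ∈ E n →
      ∃ b : ℕ → Y, b 0 = bo ∧ b m = T ∧
        (∀ i, 1 ≤ i → i ≤ m - 1 → b i ∈ Set.Ico (u i) (v i)) ∧
        (∀ i, OscLE (f x) (Set.Ioc (b i) (b (i + 1))) e) := by
    intro x hxV' hxE
    obtain ⟨⟨hxV, -, -⟩, hxPins⟩ := hxV'
    refine trap hT hm1 (hszle x hxV hxE) rfl (hsz'_spec x)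
      (grd_mono_succ (f x) e bo) (grd_osc (hfx x) he.le bo) ?_ ?_
    · intro i h1 h2
      obtain ⟨c1, c2, c3, -⟩ := Hcorr i h1 h2
      exact ⟨c1, c2, c3⟩
    · intro i h1 h2
      have := Set.mem_iInter.1 hxPins i
      have hmem := Set.mem_iInter.1 this (Finset.mem_Icc.2 ⟨h1, h2⟩)
      exact hmem.2
  -- uniform bound on the slice members
  have hpair : ∀ x₁, x₁ ∈ V' → x₁ ∈ E n → ∀ x₂, x₂ ∈ V' → x₂ ∈ E n →
      ∀ y, |f x₁ y - f x₂ y| ≤ ε := by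
    intro x₁ h₁V' h₁E x₂ h₂V' h₂E y
    obtain ⟨b₁, hb10, hb1m, hmem1, hosc1⟩ := hmember x₁ h₁V' h₁E
    obtain ⟨b₂, hb20, hb2m, hmem2, hosc2⟩ := hmember x₂ h₂V' h₂E
    have pins : ∀ x, x ∈ V' →
        (|f x bo - h bo| ≤ d ∧ |f x T - h T| ≤ d ∧
         ∀ i, 1 ≤ i → i ≤ m - 1 → |f x (u i) - h (u i)| ≤ d ∧ |f x (v i) - h (v i)| ≤ d) := by
      rintro x ⟨⟨-, hpb, hpT⟩, hxPins⟩
      refine ⟨hpb.le, hpT.le, ?_⟩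
      intro i h1 h2
      have := Set.mem_iInter.1 hxPins i
      have hmem := Set.mem_iInter.1 this (Finset.mem_Icc.2 ⟨h1, h2⟩)
      exact ⟨hmem.1.1.le, hmem.1.2.le⟩
    obtain ⟨p1b, p1T, p1uv⟩ := pins x₁ h₁V'
    obtain ⟨p2b, p2T, p2uv⟩ := pins x₂ h₂V'
    rw [← hed]
    refine pair_bound he.le hd.le hbo hT hm1 hbu
      (fun i h1 h2 => (Hcorr i h1 h2).2.2.1)
      (fun i h1 h2 => (Hcorr i h1 h2).2.2.2.2.2.2)
      (fun i h1 h2 => ⟨(p1uv i h1 h2).1, (p2uv i h1 h2).1⟩)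
      (fun i h1 h2 => ⟨(p1uv i h1 h2).2, (p2uv i h1 h2).2⟩)
      ⟨p1b, p2b⟩ ⟨p1T, p2T⟩
      hb10 hb1m hmem1 hosc1 hb20 hb2m hmem2 hosc2 y
  -- extend by density and closedness to all of V'
  have hV'E : V' ⊆ closure (V' ∩ E n) := by
    intro x hx
    rw [mem_closure_iff]
    intro O hO hxO
    have h2 : (O ∩ V') ∩ E n ≠ ∅ := by
      have hxOV' : x ∈ O ∩ V' := ⟨hxO, hx⟩
      have hcl : x ∈ closure (E n) := hVE hx.1.1
      obtain ⟨w, hw⟩ := (mem_closure_iff.1 hcl) (O ∩ V') (hO.inter hV'open) hxOV'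
      exact Set.nonempty_iff_ne_empty.1 ⟨w, hw⟩
    obtain ⟨w, hw⟩ := Set.nonempty_iff_ne_empty.2 h2
    exact ⟨w, hw.1.1, hw.1.2, hw.2⟩
  have hfinal : ∀ x₁ ∈ V', ∀ x₂ ∈ V', ∀ y, |f x₁ y - f x₂ y| ≤ ε := by
    intro x₁ h₁ x₂ h₂ y
    have hcl : (x₁, x₂) ∈ closure ((V' ∩ E n) ×ˢ (V' ∩ E n)) := by
      rw [closure_prod_eq]
      exact ⟨hV'E h₁, hV'E h₂⟩
    have hclosed : IsClosed {q : X × X | |f q.1 y - f q.2 y| ≤ ε} := by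
      have hc : Continuous fun q : X × X => |f q.1 y - f q.2 y| :=
        (((hfy y).comp continuous_fst).sub ((hfy y).comp continuous_snd)).abs
      exact isClosed_le hc continuous_const
    have hsub : ((V' ∩ E n) ×ˢ (V' ∩ E n)) ⊆ {q : X × X | |f q.1 y - f q.2 y| ≤ ε} :=
      fun q hq => hpair q.1 hq.1.1 hq.1.2 q.2 hq.2.1 hq.2.2 y
    exact (hclosed.closure_subset_iff.2 hsub) hcl
  exact ⟨xs, hxsVE.1.1, V', hV'open, hxsV', hfinal⟩

end Main

theorem stmt_6 {X Y : Type*} [TopologicalSpace X] [BaireSpace X]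
    [LinearOrder Y] [TopologicalSpace Y] [OrderTopology Y] [CompactSpace Y]
    (f : X → Y → ℝ) (hfx : ∀ x, Continuous (f x))
    (hfy : ∀ y, Continuous fun x => f x y) :
    ∃ A : Set X, Dense A ∧ IsGδ A ∧
      ∀ x ∈ A, ∀ y : Y, ContinuousAt (fun p : X × Y => f p.1 p.2) (x, y) := by
  rcases isEmpty_or_nonempty Y with hY | hY
  · exact ⟨Set.univ, dense_univ, IsGδ.univ, fun x _ y => (IsEmpty.false y).elim⟩
  · set G : ℕ → Set X := fun k =>
      {x | ∃ U, IsOpen U ∧ x ∈ U ∧ ∀ x₁ ∈ U, ∀ x₂ ∈ U, ∀ y, |f x₁ y - f x₂ y| ≤ 1 / (k + 1)}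
      with hG_def
    have hGopen : ∀ k, IsOpen (G k) := by
      intro k
      rw [isOpen_iff_forall_mem_open]
      rintro x ⟨U, hU, hxU, hp⟩
      exact ⟨U, fun x' hx' => ⟨U, hU, hx', hp⟩, hU, hxU⟩
    have hGdense : ∀ k, Dense (G k) := fun k =>
      dense_good f hfx hfy (by positivity)
    refine ⟨⋂ k, G k, dense_iInter_of_isOpen_nat hGopen hGdense,
      IsGδ.iInter_of_isOpen hGopen, ?_⟩
    intro x hx y₀
    have key : Filter.Tendsto (fun p : X × Y => f p.1 p.2) (𝓝 (x, y₀)) (𝓝 (f x y₀)) := by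
      rw [Metric.tendsto_nhds]
      intro ε₀ hε₀
      obtain ⟨k, hk⟩ := exists_nat_one_div_lt (half_pos hε₀)
      obtain ⟨U, hU, hxU, hp⟩ := Set.mem_iInter.1 hx k
      have hWyopen : IsOpen {y | |f x y - f x y₀| < ε₀ / 2} := by
        have hc : Continuous fun y => |f x y - f x y₀| := ((hfx x).sub continuous_const).abs
        exact isOpen_lt hc continuous_const
      have hy₀ : y₀ ∈ {y | |f x y - f x y₀| < ε₀ / 2} := by
        simp only [Set.mem_setOf_eq, sub_self, abs_zero]
        exact half_pos hε₀
      have hnhds : U ×ˢ {y | |f x y - f x y₀| < ε₀ / 2} ∈ 𝓝 ((x, y₀) : X × Y) :=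
        prod_mem_nhds (hU.mem_nhds hxU) (hWyopen.mem_nhds hy₀)
      filter_upwards [hnhds] with q hq
      obtain ⟨hq1, hq2⟩ := hq
      have h1 : |f q.1 q.2 - f x q.2| ≤ 1 / (k + 1) := hp q.1 hq1 x hxU q.2
      have h2 : |f x q.2 - f x y₀| < ε₀ / 2 := hq2
      rw [Real.dist_eq]
      calc |f q.1 q.2 - f x y₀| ≤ |f q.1 q.2 - f x q.2| + |f x q.2 - f x y₀| := abs_sub_le _ _ _
        _ < 1 / (k + 1) + ε₀ / 2 := add_lt_add_of_le_of_lt h1 h2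
        _ < ε₀ / 2 + ε₀ / 2 := by linarith [hk]
        _ = ε₀ := add_halves ε₀
    exact key
end

section
/- Let $(Y,<)$ be a linearly ordered set and $D$ the set of pairs of neighbor points of $Y$. Define $Z = Y \cup (D \times (0,1))$ with the linear order extending that of $Y$, in which each point $(d, t)$ with $d = \{a_d, b_d\}$, $a_d < b_d$ neighbors, lies between $a_d$ and $b_d$, ordered among themselves by $t$. If $Y$ is compact in its order topology, then $Z$ is a compact linearly ordered space with no neighbor elements (hence connected), and $Y$ is a compact subspace of $Z$. -/
/-- A pair of neighbor points of `Y`: `a < b` with `(a, b) = ∅`. -/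
def NeighborPair (Y : Type*) [LinearOrder Y] : Type _ :=
  {p : Y × Y // p.1 < p.2 ∧ Set.Ioo p.1 p.2 = ∅}

/-- `Z = Y ∪ (D × (0,1))`: the space obtained from `Y` by filling each gap between
neighbor points with a copy of the interval `(0,1)`. -/
def Gapfill (Y : Type*) [LinearOrder Y] : Type _ :=
  Y ⊕ (NeighborPair Y × ↥(Set.Ioo (0:ℝ) 1))

variable {Y : Type*} [LinearOrder Y]

/-- Inclusion of `Y` into `Z`. -/
def Gapfill.ofY (y : Y) : Gapfill Y := Sum.inl y

/-- The new points `(d, t)` of `Z`. -/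
def Gapfill.gap (d : NeighborPair Y) (t : ↥(Set.Ioo (0:ℝ) 1)) : Gapfill Y := Sum.inr (d, t)

/-- The map realizing the order on `Gapfill Y`: `y ↦ (y, 0)` and `(d, t) ↦ (a_d, t)`,
into `Y × ℝ` with the lexicographic order. -/
def gapfillEmbed : Gapfill Y → Lex (Y × ℝ)
  | .inl y => toLex (y, 0)
  | .inr (d, t) => toLex (d.1.1, t.1)

theorem NeighborPair.eq_of_left_eq (d d' : NeighborPair Y) (h : d.1.1 = d'.1.1) :
    d = d' := by
  obtain ⟨⟨a, b⟩, hab, hIoo⟩ := d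
  obtain ⟨⟨a', b'⟩, hab', hIoo'⟩ := d'
  simp only at h
  subst h
  rcases lt_trichotomy b b' with hlt | heq | hgt
  · have : b ∈ Set.Ioo a b' := ⟨hab, hlt⟩
    rw [hIoo'] at this; exact this.elim
  · subst heq; rfl
  · have : b' ∈ Set.Ioo a b := ⟨hab', hgt⟩
    rw [hIoo] at this; exact this.elim

theorem gapfillEmbed_injective : Function.Injective (gapfillEmbed (Y := Y)) := by
  rintro (y | ⟨d, t⟩) (y' | ⟨d', t'⟩) h <;>
    simp only [gapfillEmbed] at h <;>
    obtain ⟨h1, h2⟩ := Prod.mk.injEq .. ▸ toLex.injective h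
  · rw [h1]
  · exact absurd h2.symm (ne_of_gt t'.2.1)
  · exact absurd h2 (ne_of_gt t.2.1)
  · rw [NeighborPair.eq_of_left_eq d d' h1, Subtype.ext h2]

noncomputable instance : LinearOrder (Gapfill Y) :=
  LinearOrder.lift' gapfillEmbed gapfillEmbed_injective

noncomputable instance : TopologicalSpace (Gapfill Y) := Preorder.topology (Gapfill Y)
instance : OrderTopology (Gapfill Y) := ⟨rfl⟩

namespace Gapfill

/-- First coordinate of the embedding. -/
def pi : Gapfill Y → Y := Sum.elim id fun p => p.1.1.1

/-- Second coordinate of the embedding. -/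
def tau : Gapfill Y → ℝ := Sum.elim (fun _ => 0) fun p => p.2.1

@[simp] theorem pi_ofY (y : Y) : pi (Gapfill.ofY y) = y := rfl
@[simp] theorem pi_gap (d : NeighborPair Y) (t : ↥(Set.Ioo (0:ℝ) 1)) :
    pi (Gapfill.gap d t) = d.1.1 := rfl
@[simp] theorem tau_ofY (y : Y) : tau (Gapfill.ofY y) = 0 := rfl
@[simp] theorem tau_gap (d : NeighborPair Y) (t : ↥(Set.Ioo (0:ℝ) 1)) :
    tau (Gapfill.gap d t) = t.1 := rfl

theorem embed_eq (z : Gapfill Y) : gapfillEmbed z = toLex (pi z, tau z) := by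
  cases z with
  | inl y => rfl
  | inr p => obtain ⟨d, t⟩ := p; rfl

theorem le_def (z z' : Gapfill Y) :
    z ≤ z' ↔ pi z < pi z' ∨ (pi z = pi z' ∧ tau z ≤ tau z') := by
  show gapfillEmbed z ≤ gapfillEmbed z' ↔ _
  rw [embed_eq, embed_eq, Prod.Lex.le_iff]
  exact Iff.rfl

theorem lt_def (z z' : Gapfill Y) :
    z < z' ↔ pi z < pi z' ∨ (pi z = pi z' ∧ tau z < tau z') := by
  show gapfillEmbed z < gapfillEmbed z' ↔ _
  rw [embed_eq, embed_eq, Prod.Lex.lt_iff]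
  exact Iff.rfl

theorem tau_nonneg (z : Gapfill Y) : 0 ≤ tau z := by
  cases z with
  | inl y => exact le_refl 0
  | inr p => exact p.2.2.1.le

theorem tau_lt_one (z : Gapfill Y) : tau z < 1 := by
  cases z with
  | inl y => exact one_pos
  | inr p => exact p.2.2.2

theorem pi_mono {z u : Gapfill Y} (h : z ≤ u) : pi z ≤ pi u := by
  rcases (le_def z u).1 h with h | ⟨h, -⟩
  · exact h.le
  · exact h.le

end Gapfill

theorem NeighborPair.right_le {d : NeighborPair Y} {y : Y} (h : d.1.1 < y) : d.1.2 ≤ y := by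
  by_contra hy
  have hmem : y ∈ Set.Ioo d.1.1 d.1.2 := ⟨h, lt_of_not_ge hy⟩
  rw [d.2.2] at hmem
  exact hmem

namespace Gapfill

theorem inl_le_iff {y : Y} {u : Gapfill Y} : Gapfill.ofY y ≤ u ↔ y ≤ pi u := by
  rw [le_def]
  simp only [pi_ofY, tau_ofY]
  constructor
  · rintro (h | ⟨h, -⟩)
    · exact h.le
    · exact h.le
  · intro h
    rcases h.lt_or_eq with h | h
    · exact Or.inl h
    · exact Or.inr ⟨h, tau_nonneg u⟩

theorem ofY_lt_ofY {y y' : Y} : Gapfill.ofY y < Gapfill.ofY y' ↔ y < y' := by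
  rw [lt_def]
  simp only [pi_ofY, tau_ofY]
  constructor
  · rintro (h | ⟨-, h⟩)
    · exact h
    · exact absurd h (lt_irrefl 0)
  · exact fun h => Or.inl h

theorem ofY_lt_gap {y : Y} {d : NeighborPair Y} {t : ↥(Set.Ioo (0:ℝ) 1)} :
    Gapfill.ofY y < Gapfill.gap d t ↔ y ≤ d.1.1 := by
  rw [lt_def]
  simp only [pi_ofY, tau_ofY, pi_gap, tau_gap]
  constructor
  · rintro (h | ⟨h, -⟩)
    · exact h.le
    · exact h.le
  · intro h
    rcases h.lt_or_eq with h | h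
    · exact Or.inl h
    · exact Or.inr ⟨h, t.2.1⟩

theorem gap_lt_ofY {y : Y} {d : NeighborPair Y} {t : ↥(Set.Ioo (0:ℝ) 1)} :
    Gapfill.gap d t < Gapfill.ofY y ↔ d.1.2 ≤ y := by
  rw [lt_def]
  simp only [pi_ofY, tau_ofY, pi_gap, tau_gap]
  constructor
  · rintro (h | ⟨-, h⟩)
    · exact NeighborPair.right_le h
    · exact absurd h (not_lt.2 t.2.1.le)
  · intro h
    exact Or.inl (lt_of_lt_of_le d.2.1 h)

theorem gap_lt_gap {d d' : NeighborPair Y} {t t' : ↥(Set.Ioo (0:ℝ) 1)} :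
    Gapfill.gap d t < Gapfill.gap d' t' ↔
      d.1.1 < d'.1.1 ∨ (d = d' ∧ t.1 < t'.1) := by
  rw [lt_def]
  simp only [pi_gap, tau_gap]
  refine or_congr Iff.rfl (and_congr ?_ Iff.rfl)
  exact ⟨fun h => NeighborPair.eq_of_left_eq d d' h, fun h => congrArg (fun x => x.1.1) h⟩

end Gapfill

theorem exists_isLUB_of_compact [TopologicalSpace Y] [OrderTopology Y] [CompactSpace Y]
    [Nonempty Y] (S : Set Y) : ∃ a, IsLUB S a := by
  rcases S.eq_empty_or_nonempty with rfl | hS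
  · obtain ⟨a, -, ha⟩ := (isCompact_univ (X := Y)).exists_isLeast Set.univ_nonempty
    refine ⟨a, ?_, ?_⟩
    · intro x hx; exact absurd hx (Set.notMem_empty x)
    · intro b _; exact ha (Set.mem_univ b)
  · obtain ⟨g, hg⟩ := isClosed_closure.isCompact.exists_isGreatest hS.closure
    refine ⟨g, ?_⟩
    have h := hg.isLUB
    rwa [IsLUB, upperBounds_closure] at h

theorem gapfill_exists_isLUB [TopologicalSpace Y] [OrderTopology Y] [CompactSpace Y] [Nonempty Y]
    (S : Set (Gapfill Y)) : ∃ z, IsLUB S z := by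
  classical
  obtain ⟨a, ha⟩ := exists_isLUB_of_compact (Gapfill.pi '' S)
  have hub : ∀ z ∈ S, Gapfill.pi z ≤ a := fun z hz => ha.1 ⟨z, hz, rfl⟩
  have hlb : ∀ u ∈ upperBounds S, a ≤ Gapfill.pi u := fun u hu =>
    ha.2 (by rintro x ⟨z, hz, rfl⟩; exact Gapfill.pi_mono (hu hz))
  set F : Set ℝ := Gapfill.tau '' (S ∩ Gapfill.pi ⁻¹' {a}) with hFdef
  have hFbdd : BddAbove F := ⟨1, by rintro x ⟨z, -, rfl⟩; exact (Gapfill.tau_lt_one z).le⟩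
  have htauub : ∀ u ∈ upperBounds S, Gapfill.pi u = a → Gapfill.tau u ∈ upperBounds F := by
    rintro u hu hua x ⟨z, ⟨hz, hza⟩, rfl⟩
    rcases (Gapfill.le_def z u).1 (hu hz) with h | ⟨-, h⟩
    · rw [show Gapfill.pi z = a from hza, hua] at h
      exact absurd h (lt_irrefl a)
    · exact h
  by_cases h : ∃ (d : NeighborPair Y) (t : ↥(Set.Ioo (0:ℝ) 1)), Gapfill.gap d t ∈ S ∧ d.1.1 = a
  · obtain ⟨d, t, hdt, hda⟩ := h
    have htF : t.1 ∈ F := ⟨Gapfill.gap d t, ⟨hdt, hda⟩, rfl⟩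
    have hFne : F.Nonempty := ⟨t.1, htF⟩
    have hr0 : 0 < sSup F := lt_of_lt_of_le t.2.1 (le_csSup hFbdd htF)
    have hr1 : sSup F ≤ 1 := csSup_le hFne (by rintro x ⟨z, -, rfl⟩; exact (Gapfill.tau_lt_one z).le)
    by_cases h1 : sSup F < 1
    · refine ⟨Gapfill.gap d ⟨sSup F, hr0, h1⟩, ?_, ?_⟩
      · intro z hz
        rw [Gapfill.le_def]
        simp only [Gapfill.pi_gap, Gapfill.tau_gap]
        rcases lt_or_eq_of_le (hub z hz) with hlt | heq
        · left; rw [hda]; exact hlt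
        · right
          refine ⟨by rw [heq, hda], ?_⟩
          exact le_csSup hFbdd ⟨z, ⟨hz, heq⟩, rfl⟩
      · intro u hu
        rw [Gapfill.le_def]
        simp only [Gapfill.pi_gap, Gapfill.tau_gap]
        rcases lt_or_eq_of_le (hlb u hu) with hlt | heq
        · left; rw [hda]; exact hlt
        · right
          exact ⟨by rw [hda, heq], csSup_le hFne (htauub u hu heq.symm)⟩
    · have hr_eq : sSup F = 1 := le_antisymm hr1 (not_lt.1 h1)
      refine ⟨Gapfill.ofY d.1.2, ?_, ?_⟩
      · intro z hz
        rw [Gapfill.le_def]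
        simp only [Gapfill.pi_ofY]
        left
        exact lt_of_le_of_lt (hub z hz) (hda ▸ d.2.1)
      · intro u hu
        rcases lt_or_eq_of_le (hlb u hu) with hlt | heq
        · rw [Gapfill.inl_le_iff]
          exact NeighborPair.right_le (hda ▸ hlt)
        · have hble := csSup_le hFne (htauub u hu heq.symm)
          rw [hr_eq] at hble
          exact absurd hble (not_le.2 (Gapfill.tau_lt_one u))
  · refine ⟨Gapfill.ofY a, ?_, ?_⟩
    · intro z hz
      rcases lt_or_eq_of_le (hub z hz) with hlt | heq
      · rw [Gapfill.le_def]
        simp only [Gapfill.pi_ofY]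
        exact Or.inl hlt
      · cases z with
        | inl y =>
          show Gapfill.ofY y ≤ Gapfill.ofY a
          rw [Gapfill.le_def]
          simp only [Gapfill.pi_ofY, Gapfill.tau_ofY]
          exact Or.inr ⟨heq, le_refl 0⟩
        | inr p =>
          exact absurd ⟨p.1, p.2, hz, heq⟩ h
    · intro u hu
      rw [Gapfill.inl_le_iff]
      exact hlb u hu

theorem gapfill_dense (z z' : Gapfill Y) (h : z < z') : ∃ w, z < w ∧ w < z' := by
  cases z with
  | inl y =>
    cases z' with
    | inl y' =>
      have hyy' : y < y' := Gapfill.ofY_lt_ofY.1 h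
      rcases (Set.Ioo y y').eq_empty_or_nonempty with he | ⟨m, hm⟩
      · refine ⟨Gapfill.gap ⟨(y, y'), hyy', he⟩ ⟨1/2, by norm_num⟩, ?_, ?_⟩
        · exact Gapfill.ofY_lt_gap.2 le_rfl
        · exact Gapfill.gap_lt_ofY.2 le_rfl
      · exact ⟨Gapfill.ofY m, Gapfill.ofY_lt_ofY.2 hm.1, Gapfill.ofY_lt_ofY.2 hm.2⟩
    | inr p =>
      obtain ⟨d, t⟩ := p
      have hy : y ≤ d.1.1 := Gapfill.ofY_lt_gap.1 h
      refine ⟨Gapfill.gap d ⟨t.1 / 2, by constructor <;> [linarith [t.2.1]; linarith [t.2.2]]⟩,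
        ?_, ?_⟩
      · exact Gapfill.ofY_lt_gap.2 hy
      · exact Gapfill.gap_lt_gap.2 (Or.inr ⟨rfl, by dsimp; linarith [t.2.1]⟩)
  | inr p =>
    obtain ⟨d, t⟩ := p
    cases z' with
    | inl y' =>
      have hy : d.1.2 ≤ y' := Gapfill.gap_lt_ofY.1 h
      refine ⟨Gapfill.gap d ⟨(t.1 + 1) / 2, by constructor <;> [linarith [t.2.1]; linarith [t.2.2]]⟩,
        ?_, ?_⟩
      · exact Gapfill.gap_lt_gap.2 (Or.inr ⟨rfl, by dsimp; linarith [t.2.2]⟩)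
      · exact Gapfill.gap_lt_ofY.2 hy
    | inr p' =>
      obtain ⟨d', t'⟩ := p'
      rcases Gapfill.gap_lt_gap.1 h with hlt | ⟨heq, hlt⟩
      · refine ⟨Gapfill.gap d ⟨(t.1 + 1) / 2,
          by constructor <;> [linarith [t.2.1]; linarith [t.2.2]]⟩, ?_, ?_⟩
        · exact Gapfill.gap_lt_gap.2 (Or.inr ⟨rfl, by dsimp; linarith [t.2.2]⟩)
        · exact Gapfill.gap_lt_gap.2 (Or.inl hlt)
      · subst heq
        refine ⟨Gapfill.gap d ⟨(t.1 + t'.1) / 2,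
          by constructor <;> [linarith [t.2.1, t'.2.1]; linarith [t.2.2, t'.2.2]]⟩, ?_, ?_⟩
        · exact Gapfill.gap_lt_gap.2 (Or.inr ⟨rfl, by dsimp; linarith⟩)
        · exact Gapfill.gap_lt_gap.2 (Or.inr ⟨rfl, by dsimp; linarith⟩)

theorem gapfill_ofY_continuous [TopologicalSpace Y] [OrderTopology Y] :
    Continuous (Gapfill.ofY : Y → Gapfill Y) := by
  apply continuous_generateFrom_iff.mpr
  rintro s ⟨z, rfl | rfl⟩
  · -- Ioi z
    cases z with
    | inl y₀ =>
      have hpre : Gapfill.ofY ⁻¹' Set.Ioi (Gapfill.ofY y₀) = Set.Ioi y₀ := by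
        ext y
        simp only [Set.mem_preimage, Set.mem_Ioi]
        exact Gapfill.ofY_lt_ofY
      show IsOpen (Gapfill.ofY ⁻¹' Set.Ioi (Gapfill.ofY y₀))
      rw [hpre]; exact isOpen_Ioi
    | inr p =>
      have hpre : Gapfill.ofY ⁻¹' Set.Ioi (Gapfill.gap p.1 p.2) = Set.Ioi p.1.1.1 := by
        ext y
        simp only [Set.mem_preimage, Set.mem_Ioi]
        rw [Gapfill.gap_lt_ofY]
        exact ⟨fun hb => lt_of_lt_of_le p.1.2.1 hb, fun ha => NeighborPair.right_le ha⟩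
      show IsOpen (Gapfill.ofY ⁻¹' Set.Ioi (Gapfill.gap p.1 p.2))
      rw [hpre]; exact isOpen_Ioi
  · -- Iio z
    cases z with
    | inl y₀ =>
      have hpre : Gapfill.ofY ⁻¹' Set.Iio (Gapfill.ofY y₀) = Set.Iio y₀ := by
        ext y
        simp only [Set.mem_preimage, Set.mem_Iio]
        exact Gapfill.ofY_lt_ofY
      show IsOpen (Gapfill.ofY ⁻¹' Set.Iio (Gapfill.ofY y₀))
      rw [hpre]; exact isOpen_Iio
    | inr p =>
      have hpre : Gapfill.ofY ⁻¹' Set.Iio (Gapfill.gap p.1 p.2) = Set.Iio p.1.1.2 := by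
        ext y
        simp only [Set.mem_preimage, Set.mem_Iio]
        rw [Gapfill.ofY_lt_gap]
        exact ⟨fun hya => lt_of_le_of_lt hya p.1.2.1,
          fun hyb => le_of_not_gt fun hay => (NeighborPair.right_le hay).not_gt hyb⟩
      show IsOpen (Gapfill.ofY ⁻¹' Set.Iio (Gapfill.gap p.1 p.2))
      rw [hpre]; exact isOpen_Iio

theorem stmt_7 [TopologicalSpace Y] [OrderTopology Y] [CompactSpace Y] [Nonempty Y] :
    -- the order on `Z` extends that of `Y` ...
    (∀ y y' : Y, Gapfill.ofY y < Gapfill.ofY y' ↔ y < y') ∧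
    -- ... each `(d, t)` lies between `a_d` and `b_d` ...
    (∀ (y : Y) (d : NeighborPair Y) (t : ↥(Set.Ioo (0:ℝ) 1)),
      Gapfill.ofY y < Gapfill.gap d t ↔ y ≤ d.1.1) ∧
    (∀ (y : Y) (d : NeighborPair Y) (t : ↥(Set.Ioo (0:ℝ) 1)),
      Gapfill.gap d t < Gapfill.ofY y ↔ d.1.2 ≤ y) ∧
    -- ... points of the gaps are ordered by left endpoint and then by `t` ...
    (∀ (d d' : NeighborPair Y) (t t' : ↥(Set.Ioo (0:ℝ) 1)),
      Gapfill.gap d t < Gapfill.gap d' t' ↔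
        d.1.1 < d'.1.1 ∨ (d = d' ∧ t.1 < t'.1)) ∧
    -- `Z` is a compact linearly ordered space ...
    CompactSpace (Gapfill Y) ∧
    -- ... with no neighbor elements ...
    (¬ ∃ z z' : Gapfill Y, z < z' ∧ Set.Ioo z z' = ∅) ∧
    -- ... hence connected ...
    ConnectedSpace (Gapfill Y) ∧
    -- ... and `Y` is a compact subspace of `Z`.
    Topology.IsEmbedding (Gapfill.ofY : Y → Gapfill Y) ∧
    IsCompact (Set.range (Gapfill.ofY : Y → Gapfill Y)) := by
  letI supSet : SupSet (Gapfill Y) := ⟨fun S => (gapfill_exists_isLUB S).choose⟩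
  letI cl : CompleteLattice (Gapfill Y) :=
    completeLatticeOfSup _ fun S => (gapfill_exists_isLUB S).choose_spec
  letI ccl : ConditionallyCompleteLinearOrder (Gapfill Y) :=
    { (CompleteLattice.toConditionallyCompleteLattice (α := Gapfill Y)) with
      le_total := le_total
      toDecidableLE := (inferInstance : LinearOrder (Gapfill Y)).toDecidableLE
      toDecidableEq := (inferInstance : LinearOrder (Gapfill Y)).toDecidableEq
      toDecidableLT := (inferInstance : LinearOrder (Gapfill Y)).toDecidableLT
      compare_eq_compareOfLessAndEq :=
        (inferInstance : LinearOrder (Gapfill Y)).compare_eq_compareOfLessAndEq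
      csSup_of_not_bddAbove := fun s H => absurd (OrderTop.bddAbove s) H
      csInf_of_not_bddBelow := fun s H => absurd (OrderBot.bddBelow s) H }
  haveI hicc : CompactIccSpace (Gapfill Y) :=
    @ConditionallyCompleteLinearOrder.toCompactIccSpace _ ccl _ ⟨rfl⟩
  haveI hcomp : CompactSpace (Gapfill Y) := ⟨by rw [← Set.Icc_bot_top]; exact isCompact_Icc⟩
  haveI hdense : DenselyOrdered (Gapfill Y) := ⟨gapfill_dense⟩
  haveI : Nonempty (Gapfill Y) := ⟨Gapfill.ofY (Classical.arbitrary Y)⟩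
  haveI hpc : PreconnectedSpace (Gapfill Y) :=
    ⟨@Set.OrdConnected.isPreconnected _ _ ccl ⟨rfl⟩ hdense _ Set.ordConnected_univ⟩
  haveI hconn : ConnectedSpace (Gapfill Y) := ⟨⟨Gapfill.ofY (Classical.arbitrary Y)⟩⟩
  have hcont := gapfill_ofY_continuous (Y := Y)
  have hinj : Function.Injective (Gapfill.ofY : Y → Gapfill Y) := fun a b hab => by
    injection hab
  have hce := hcont.isClosedEmbedding hinj
  refine ⟨fun y y' => Gapfill.ofY_lt_ofY, fun y d t => Gapfill.ofY_lt_gap,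
    fun y d t => Gapfill.gap_lt_ofY, fun d d' t t' => Gapfill.gap_lt_gap,
    hcomp, ?_, hconn, hce.toIsEmbedding, isCompact_range hcont⟩
  rintro ⟨z, z', hlt, hIoo⟩
  obtain ⟨w, hw1, hw2⟩ := gapfill_dense z z' hlt
  rw [Set.eq_empty_iff_forall_notMem] at hIoo
  exact hIoo w ⟨hw1, hw2⟩
end

section
/- Let $X$ be a Baire space, $Y$ a linearly ordered compact space, $Z$ the connected linearly ordered compact obtained from $Y$ by linearly interpolating across each pair of neighbor points, and $f : X \times Y \to \mathbb{R}$ separately continuous. Define $g : X \times Z \to \mathbb{R}$ by $g(x, z) = f(x, z)$ for $z \in Y$ and $g(x, (d, t)) = (1 - t) f(x, a_d) + t f(x, b_d)$ for a neighbor pair $d = \{a_d, b_d\}$ and $t \in (0,1)$. Then $g$ is separately continuous. -/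
variable {Y : Type*} [LinearOrder Y]

/-- The extension `g` of a function `f : X → Y → ℝ` to `X → Z → ℝ`:
`g x y = f x y` for `y ∈ Y`, and `g x (d, t) = (1 - t) f x a_d + t f x b_d`
on the gap filled in between a neighbor pair `a_d < b_d`. -/
noncomputable def gapExtend {X : Type*} (f : X → Y → ℝ) (x : X) : Gapfill Y → ℝ
  | .inl y => f x y
  | .inr (d, t) => (1 - t.1) * f x d.1.1 + t.1 * f x d.1.2

/-! ### Auxiliary lemmas -/

theorem Gapfill.lt_def_s8 (a b : Gapfill Y) : a < b ↔ gapfillEmbed a < gapfillEmbed b := Iff.rfl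

theorem Gapfill.ofY_lt_ofY_s8 {y y' : Y} : Gapfill.ofY y < Gapfill.ofY y' ↔ y < y' := by
  rw [Gapfill.lt_def_s8]
  simp only [gapfillEmbed, Gapfill.ofY, Prod.Lex.lt_iff]
  simp

theorem Gapfill.ofY_lt_gap_s8 {y : Y} {d : NeighborPair Y} {t : ↥(Set.Ioo (0:ℝ) 1)} :
    Gapfill.ofY y < Gapfill.gap d t ↔ y ≤ d.1.1 := by
  rw [Gapfill.lt_def_s8]
  simp only [gapfillEmbed, Gapfill.ofY, Gapfill.gap, Prod.Lex.lt_iff]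
  constructor
  · rintro (h | ⟨rfl, _⟩); exacts [h.le, le_rfl]
  · intro h; rcases h.lt_or_eq with h | rfl
    exacts [Or.inl h, Or.inr ⟨rfl, t.2.1⟩]

theorem Gapfill.gap_lt_ofY_s8 {y : Y} {d : NeighborPair Y} {t : ↥(Set.Ioo (0:ℝ) 1)} :
    Gapfill.gap d t < Gapfill.ofY y ↔ d.1.1 < y := by
  rw [Gapfill.lt_def_s8]
  simp only [gapfillEmbed, Gapfill.ofY, Gapfill.gap, Prod.Lex.lt_iff]
  constructor
  · rintro (h | ⟨rfl, h⟩)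
    · exact h
    · exact absurd h (not_lt.2 t.2.1.le)
  · exact Or.inl

theorem Gapfill.gap_lt_gap_s8 {d d' : NeighborPair Y} {t t' : ↥(Set.Ioo (0:ℝ) 1)} :
    Gapfill.gap d t < Gapfill.gap d' t' ↔ d.1.1 < d'.1.1 ∨ (d = d' ∧ t.1 < t'.1) := by
  rw [Gapfill.lt_def_s8]
  simp only [gapfillEmbed, Gapfill.gap, Prod.Lex.lt_iff]
  constructor
  · rintro (h | ⟨h, h2⟩)
    · exact Or.inl h
    · exact Or.inr ⟨NeighborPair.eq_of_left_eq _ _ h, h2⟩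
  · rintro (h | ⟨rfl, h⟩)
    · exact Or.inl h
    · exact Or.inr ⟨rfl, h⟩

/-- convex combination bound -/
theorem convex_abs_lt {p q r ε u : ℝ} (hu0 : 0 ≤ u) (hu1 : u ≤ 1)
    (hp : |p - r| < ε) (hq : |q - r| < ε) : |((1 - u) * p + u * q) - r| < ε := by
  have h1 : ((1 - u) * p + u * q) - r = (1 - u) * (p - r) + u * (q - r) := by ring
  rw [h1]
  calc |(1 - u) * (p - r) + u * (q - r)| ≤ |(1 - u) * (p - r)| + |u * (q - r)| := abs_add_le _ _
    _ = (1 - u) * |p - r| + u * |q - r| := by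
        rw [abs_mul, abs_mul, abs_of_nonneg (by linarith), abs_of_nonneg hu0]
    _ < ε := by
        rcases eq_or_lt_of_le hu0 with rfl | hu0'
        · simpa using hp
        · nlinarith [abs_nonneg (p - r), abs_nonneg (q - r),
            mul_lt_mul_of_pos_left hq hu0']

/-- Key lemma: continuity of the gap extension of a continuous function. -/
theorem gapExtend_continuous_aux [TopologicalSpace Y] [OrderTopology Y]
    (g : Y → ℝ) (hg : Continuous g) :
    Continuous (gapExtend (fun _ : Unit => g) ()) := by
  set G : Gapfill Y → ℝ := gapExtend (fun _ : Unit => g) () with hG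
  have hGofY : ∀ y : Y, G (Gapfill.ofY y) = g y := fun y => rfl
  have hGgap : ∀ (d : NeighborPair Y) (t : ↥(Set.Ioo (0:ℝ) 1)),
      G (Gapfill.gap d t) = (1 - t.1) * g d.1.1 + t.1 * g d.1.2 := fun d t => rfl
  rw [continuous_iff_continuousAt]
  intro z
  rw [ContinuousAt, Metric.tendsto_nhds]
  intro ε hε
  obtain (y | ⟨d, t⟩) := z
  swap
  · -- interior of a gap
    obtain ⟨ht0, ht1⟩ := t.2
    have hΔ0 : (0:ℝ) ≤ |g d.1.2 - g d.1.1| := abs_nonneg _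
    set Δ := |g d.1.2 - g d.1.1| with hΔ
    set δ := min (min t.1 (1 - t.1)) (ε / (Δ + 1)) / 2 with hδ
    have hδ0 : 0 < δ := by
      apply div_pos _ two_pos
      exact lt_min (lt_min ht0 (by linarith)) (div_pos hε (by linarith))
    have hδt : δ < t.1 := by
      have h1 : min (min t.1 (1 - t.1)) (ε / (Δ + 1)) ≤ t.1 :=
        le_trans (min_le_left _ _) (min_le_left _ _)
      rw [hδ]; linarith
    have hδ1 : δ < 1 - t.1 := by
      have h1 : min (min t.1 (1 - t.1)) (ε / (Δ + 1)) ≤ 1 - t.1 :=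
        le_trans (min_le_left _ _) (min_le_right _ _)
      rw [hδ]; linarith
    have hδε : δ * (Δ + 1) < ε := by
      have h1 : min (min t.1 (1 - t.1)) (ε / (Δ + 1)) ≤ ε / (Δ + 1) := min_le_right _ _
      have h2 : δ ≤ ε / (Δ + 1) / 2 := by rw [hδ]; linarith
      have h3 : δ * (Δ + 1) ≤ ε / (Δ + 1) / 2 * (Δ + 1) :=
        mul_le_mul_of_nonneg_right h2 (by linarith)
      have h4 : ε / (Δ + 1) / 2 * (Δ + 1) = ε / 2 := by field_simp
      linarith
    set t₁ : ↥(Set.Ioo (0:ℝ) 1) := ⟨t.1 - δ, by constructor <;> linarith⟩ with ht₁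
    set t₂ : ↥(Set.Ioo (0:ℝ) 1) := ⟨t.1 + δ, by constructor <;> linarith⟩ with ht₂
    have hmem : (Sum.inr (d, t) : Gapfill Y) ∈
        Set.Ioo (Gapfill.gap d t₁) (Gapfill.gap d t₂) := by
      constructor
      · exact Gapfill.gap_lt_gap_s8.mpr (Or.inr ⟨rfl, by simp [ht₁]; linarith⟩)
      · exact Gapfill.gap_lt_gap_s8.mpr (Or.inr ⟨rfl, by simp [ht₂]; linarith⟩)
    filter_upwards [isOpen_Ioo.mem_nhds hmem] with w hw
    obtain (w' | ⟨d', u⟩) := w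
    · exfalso
      have h1 : d.1.1 < w' := Gapfill.gap_lt_ofY_s8.mp hw.1
      have h2 : w' ≤ d.1.1 := Gapfill.ofY_lt_gap_s8.mp hw.2
      exact absurd (lt_of_le_of_lt h2 h1) (lt_irrefl _)
    · have h1 := Gapfill.gap_lt_gap_s8.mp hw.1
      have h2 := Gapfill.gap_lt_gap_s8.mp hw.2
      rcases h1 with h1 | ⟨rfl, h1⟩
      · rcases h2 with h2 | ⟨rfl, h2⟩
        · exact absurd h1 (lt_asymm h2)
        · exact absurd h1 (lt_irrefl _)
      · rcases h2 with h2 | ⟨_, h2⟩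
        · exact absurd h2 (lt_irrefl _)
        · -- w = gap d u with t₁ < u < t₂
          show dist ((1 - u.1) * g d.1.1 + u.1 * g d.1.2)
            ((1 - t.1) * g d.1.1 + t.1 * g d.1.2) < ε
          rw [Real.dist_eq]
          have heq : (1 - u.1) * g d.1.1 + u.1 * g d.1.2 -
              ((1 - t.1) * g d.1.1 + t.1 * g d.1.2) = (u.1 - t.1) * (g d.1.2 - g d.1.1) := by
            ring
          rw [heq, abs_mul, ← hΔ]
          have habs : |u.1 - t.1| < δ := by
            rw [abs_lt]
            simp only [ht₁] at h1
            simp only [ht₂] at h2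
            constructor <;> linarith
          nlinarith [abs_nonneg (u.1 - t.1)]
  · -- z = ofY y
    have hR : ∃ V : Set (Gapfill Y), IsOpen V ∧ Gapfill.ofY y ∈ V ∧
        ∀ w ∈ V, Gapfill.ofY y ≤ w → dist (G w) (g y) < ε := by
      by_cases hmax : ∃ y', y < y'
      · by_cases hd : ∃ d : NeighborPair Y, d.1.1 = y
        · -- right neighbor
          obtain ⟨d, hd1⟩ := hd
          have hΔ0 : (0:ℝ) ≤ |g d.1.2 - g y| := abs_nonneg _
          set Δ := |g d.1.2 - g y| with hΔ
          set s : ℝ := min (1/2) (ε / (Δ + 1)) with hs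
          have hs0 : 0 < s := lt_min (by norm_num) (div_pos hε (by linarith))
          have hs1 : s < 1 := lt_of_le_of_lt (min_le_left _ _) (by norm_num)
          have hsε : s * (Δ + 1) ≤ ε := by
            have h1 : s ≤ ε / (Δ + 1) := min_le_right _ _
            have h2 : s * (Δ + 1) ≤ ε / (Δ + 1) * (Δ + 1) :=
              mul_le_mul_of_nonneg_right h1 (by linarith)
            have h3 : ε / (Δ + 1) * (Δ + 1) = ε := by field_simp
            linarith
          refine ⟨Set.Iio (Gapfill.gap d ⟨s, hs0, hs1⟩), isOpen_Iio, ?_, ?_⟩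
          · exact Gapfill.ofY_lt_gap_s8.mpr (le_of_eq hd1.symm)
          · intro w hw hle
            rcases hle.lt_or_eq with hlt | heq
            swap
            · rw [← heq, hGofY]; simpa using hε
            obtain (w' | ⟨d', u⟩) := w
            · exfalso
              have h1 : y < w' := Gapfill.ofY_lt_ofY_s8.mp hlt
              have h2 : w' ≤ d.1.1 := Gapfill.ofY_lt_gap_s8.mp hw
              rw [hd1] at h2
              exact absurd (lt_of_lt_of_le h1 h2) (lt_irrefl _)
            · have h1 : y ≤ d'.1.1 := Gapfill.ofY_lt_gap_s8.mp hlt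
              have h2 := Gapfill.gap_lt_gap_s8.mp hw
              rcases h2 with h2 | ⟨rfl, h2⟩
              · rw [hd1] at h2
                exact absurd (lt_of_le_of_lt h1 h2) (lt_irrefl _)
              · show dist ((1 - u.1) * g d'.1.1 + u.1 * g d'.1.2) (g y) < ε
                rw [hd1, Real.dist_eq]
                have heq : (1 - u.1) * g y + u.1 * g d'.1.2 - g y
                    = u.1 * (g d'.1.2 - g y) := by ring
                rw [heq, abs_mul, abs_of_nonneg u.2.1.le]
                have hΔ' : |g d'.1.2 - g y| = Δ := by rw [hΔ]
                rw [hΔ']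
                nlinarith [u.2.1, h2]
        · -- no right neighbor pair: use continuity of g
          have hS : {w : Y | dist (g w) (g y) < ε} ∈ nhds y := by
            have := hg.continuousAt (x := y) (Metric.ball_mem_nhds (g y) hε)
            exact this
          obtain ⟨y', hy', hsub⟩ := exists_Ico_subset_of_mem_nhds hS hmax
          have hne : (Set.Ioo y y').Nonempty := by
            by_contra h
            exact hd ⟨⟨(y, y'), hy', Set.not_nonempty_iff_eq_empty.1 h⟩, rfl⟩
          obtain ⟨y'', hy''⟩ := hne
          refine ⟨Set.Iio (Gapfill.ofY y''), isOpen_Iio, Gapfill.ofY_lt_ofY_s8.mpr hy''.1, ?_⟩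
          intro w hw hle
          rcases hle.lt_or_eq with hlt | heq
          swap
          · rw [← heq, hGofY]; simpa using hε
          obtain (w' | ⟨d', u⟩) := w
          · have h1 : y < w' := Gapfill.ofY_lt_ofY_s8.mp hlt
            have h2 : w' < y'' := Gapfill.ofY_lt_ofY_s8.mp hw
            exact hsub ⟨h1.le, h2.trans hy''.2⟩
          · have h1 : y ≤ d'.1.1 := Gapfill.ofY_lt_gap_s8.mp hlt
            have h2 : d'.1.1 < y'' := Gapfill.gap_lt_ofY_s8.mp hw
            have h1' : y < d'.1.1 := by
              rcases h1.lt_or_eq with h | h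
              · exact h
              · exact absurd ⟨d', h.symm⟩ hd
            have hb : d'.1.2 ≤ y'' := by
              by_contra hb
              have : y'' ∈ Set.Ioo d'.1.1 d'.1.2 := ⟨h2, not_le.1 hb⟩
              rw [d'.2.2] at this
              exact this
            have ha_mem : d'.1.1 ∈ Set.Ico y y' := ⟨h1, h2.trans hy''.2⟩
            have hb_mem : d'.1.2 ∈ Set.Ico y y' :=
              ⟨(h1'.trans d'.2.1).le, lt_of_le_of_lt hb hy''.2⟩
            show dist ((1 - u.1) * g d'.1.1 + u.1 * g d'.1.2) (g y) < ε
            rw [Real.dist_eq]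
            exact convex_abs_lt u.2.1.le u.2.2.le
              (by rw [← Real.dist_eq]; exact hsub ha_mem)
              (by rw [← Real.dist_eq]; exact hsub hb_mem)
      · -- y is maximal
        refine ⟨Set.univ, isOpen_univ, trivial, ?_⟩
        intro w _ hle
        rcases hle.lt_or_eq with hlt | heq
        swap
        · rw [← heq, hGofY]; simpa using hε
        exfalso
        obtain (w' | ⟨d', u⟩) := w
        · exact hmax ⟨w', Gapfill.ofY_lt_ofY_s8.mp hlt⟩
        · have h1 : y ≤ d'.1.1 := Gapfill.ofY_lt_gap_s8.mp hlt
          exact hmax ⟨d'.1.2, lt_of_le_of_lt h1 d'.2.1⟩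
    have hL : ∃ V : Set (Gapfill Y), IsOpen V ∧ Gapfill.ofY y ∈ V ∧
        ∀ w ∈ V, w ≤ Gapfill.ofY y → dist (G w) (g y) < ε := by
      by_cases hmin : ∃ y', y' < y
      · by_cases hd : ∃ d : NeighborPair Y, d.1.2 = y
        · -- left neighbor
          obtain ⟨d, hd2⟩ := hd
          have hΔ0 : (0:ℝ) ≤ |g d.1.1 - g y| := abs_nonneg _
          set Δ := |g d.1.1 - g y| with hΔ
          set s : ℝ := max (1/2) (1 - ε / (Δ + 1)) with hs
          have hεd : 0 < ε / (Δ + 1) := div_pos hε (by linarith)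
          have hs0 : 0 < s := lt_of_lt_of_le (by norm_num) (le_max_left _ _)
          have hs1 : s < 1 := max_lt (by norm_num) (by linarith)
          have hsε : (1 - s) * (Δ + 1) ≤ ε := by
            have h1 : 1 - ε / (Δ + 1) ≤ s := le_max_right _ _
            have h2 : 1 - s ≤ ε / (Δ + 1) := by linarith
            have h3 : (1 - s) * (Δ + 1) ≤ ε / (Δ + 1) * (Δ + 1) :=
              mul_le_mul_of_nonneg_right h2 (by linarith)
            have h4 : ε / (Δ + 1) * (Δ + 1) = ε := by field_simp
            linarith
          refine ⟨Set.Ioi (Gapfill.gap d ⟨s, hs0, hs1⟩), isOpen_Ioi, ?_, ?_⟩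
          · exact Gapfill.gap_lt_ofY_s8.mpr (hd2 ▸ d.2.1)
          · intro w hw hle
            rcases hle.lt_or_eq with hlt | heq
            swap
            · rw [heq, hGofY]; simpa using hε
            obtain (w' | ⟨d', u⟩) := w
            · exfalso
              have h1 : w' < y := Gapfill.ofY_lt_ofY_s8.mp hlt
              have h2 : d.1.1 < w' := Gapfill.gap_lt_ofY_s8.mp hw
              have : w' ∈ Set.Ioo d.1.1 d.1.2 := ⟨h2, hd2 ▸ h1⟩
              rw [d.2.2] at this
              exact this
            · have h1 : d'.1.1 < y := Gapfill.gap_lt_ofY_s8.mp hlt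
              have h2 := Gapfill.gap_lt_gap_s8.mp hw
              rcases h2 with h2 | ⟨rfl, h2⟩
              · exfalso
                have : d'.1.1 ∈ Set.Ioo d.1.1 d.1.2 := ⟨h2, hd2 ▸ h1⟩
                rw [d.2.2] at this
                exact this
              · show dist ((1 - u.1) * g d.1.1 + u.1 * g d.1.2) (g y) < ε
                rw [hd2, Real.dist_eq]
                have heq : (1 - u.1) * g d.1.1 + u.1 * g y - g y
                    = (1 - u.1) * (g d.1.1 - g y) := by ring
                rw [heq, abs_mul, abs_of_nonneg (by linarith [u.2.2] : (0:ℝ) ≤ 1 - u.1)]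
                have hΔ' : |g d.1.1 - g y| = Δ := by rw [hΔ]
                rw [hΔ']
                nlinarith [u.2.2, h2]
        · -- no left neighbor pair
          have hS : {w : Y | dist (g w) (g y) < ε} ∈ nhds y := by
            have := hg.continuousAt (x := y) (Metric.ball_mem_nhds (g y) hε)
            exact this
          obtain ⟨y', hy', hsub⟩ := exists_Ioc_subset_of_mem_nhds hS hmin
          have hne : (Set.Ioo y' y).Nonempty := by
            by_contra h
            exact hd ⟨⟨(y', y), hy', Set.not_nonempty_iff_eq_empty.1 h⟩, rfl⟩
          obtain ⟨y'', hy''⟩ := hne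
          refine ⟨Set.Ioi (Gapfill.ofY y''), isOpen_Ioi, Gapfill.ofY_lt_ofY_s8.mpr hy''.2, ?_⟩
          intro w hw hle
          rcases hle.lt_or_eq with hlt | heq
          swap
          · rw [heq, hGofY]; simpa using hε
          obtain (w' | ⟨d', u⟩) := w
          · have h1 : w' < y := Gapfill.ofY_lt_ofY_s8.mp hlt
            have h2 : y'' < w' := Gapfill.ofY_lt_ofY_s8.mp hw
            exact hsub ⟨hy''.1.trans h2, h1.le⟩
          · have h1 : d'.1.1 < y := Gapfill.gap_lt_ofY_s8.mp hlt
            have h2 : y'' ≤ d'.1.1 := Gapfill.ofY_lt_gap_s8.mp hw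
            have hb : d'.1.2 ≤ y := by
              by_contra hb
              have : y ∈ Set.Ioo d'.1.1 d'.1.2 := ⟨h1, not_le.1 hb⟩
              rw [d'.2.2] at this
              exact this
            have ha_mem : d'.1.1 ∈ Set.Ioc y' y :=
              ⟨hy''.1.trans_le h2, h1.le⟩
            have hb_mem : d'.1.2 ∈ Set.Ioc y' y :=
              ⟨(hy''.1.trans_le h2).trans d'.2.1, hb⟩
            show dist ((1 - u.1) * g d'.1.1 + u.1 * g d'.1.2) (g y) < ε
            rw [Real.dist_eq]
            exact convex_abs_lt u.2.1.le u.2.2.le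
              (by rw [← Real.dist_eq]; exact hsub ha_mem)
              (by rw [← Real.dist_eq]; exact hsub hb_mem)
      · -- y is minimal
        refine ⟨Set.univ, isOpen_univ, trivial, ?_⟩
        intro w _ hle
        rcases hle.lt_or_eq with hlt | heq
        swap
        · rw [heq, hGofY]; simpa using hε
        exfalso
        obtain (w' | ⟨d', u⟩) := w
        · exact hmin ⟨w', Gapfill.ofY_lt_ofY_s8.mp hlt⟩
        · exact hmin ⟨d'.1.1, Gapfill.gap_lt_ofY_s8.mp hlt⟩
    obtain ⟨VR, hVRo, hVRm, hVR⟩ := hR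
    obtain ⟨VL, hVLo, hVLm, hVL⟩ := hL
    filter_upwards [(hVRo.inter hVLo).mem_nhds ⟨hVRm, hVLm⟩] with w hw
    show dist (G w) (g y) < ε
    rcases le_total (Gapfill.ofY y) w with h | h
    · exact hVR w hw.1 h
    · exact hVL w hw.2 h

theorem stmt_8 {X : Type*} [TopologicalSpace X] [BaireSpace X]
    [TopologicalSpace Y] [OrderTopology Y] [CompactSpace Y]
    (f : X → Y → ℝ) (hfx : ∀ x, Continuous (f x))
    (hfy : ∀ y, Continuous fun x => f x y) :
    (∀ x, Continuous (gapExtend f x)) ∧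
    (∀ z : Gapfill Y, Continuous fun x => gapExtend f x z) := by
  constructor
  · intro x
    exact gapExtend_continuous_aux (f x) (hfx x)
  · intro z
    obtain (y | ⟨d, t⟩) := z
    · exact hfy y
    · exact Continuous.add (continuous_const.mul (hfy _)) (continuous_const.mul (hfy _))
end

section
/- With $X = (0,1)$, $Y = [0,1] \times \{0,1\}$ with the lexicographic order topology, and $f : X \times Y \to \mathbb{R}$ defined by $f(x,y) = 0$ if $(x,1) \le y$ and $f(x,y) = 1$ if $y \le (x,0)$: for every fixed $y \in Y$, the function $x \mapsto f(x, y)$ is quasicontinuous on $X$, but $f$ is jointly discontinuous at every point $(x, (x,0))$ and $(x, (x,1))$ for $x \in X$. -/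
/-- The "double arrow" space: `[0,1] × {0,1}` with the lexicographic order. -/
abbrev DoubleArrow : Type := Lex (↥(Set.Icc (0:ℝ) 1) × Bool)

noncomputable instance : TopologicalSpace DoubleArrow := Preorder.topology DoubleArrow
instance : OrderTopology DoubleArrow := ⟨rfl⟩

/-- `t_l = (t, 0)` for `t ∈ (0,1)`. -/
def tLeft (x : ↥(Set.Ioo (0:ℝ) 1)) : DoubleArrow :=
  toLex (⟨x.1, x.2.1.le, x.2.2.le⟩, false)

/-- `t_r = (t, 1)` for `t ∈ (0,1)`. -/
def tRight (x : ↥(Set.Ioo (0:ℝ) 1)) : DoubleArrow :=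
  toLex (⟨x.1, x.2.1.le, x.2.2.le⟩, true)

/-- `g` is quasicontinuous at `x₀`: for all neighborhoods `U` of `x₀` and `V` of `g x₀`
there is a nonempty open `G ⊆ U` with `g '' G ⊆ V`. -/
def QuasicontinuousAt {α β : Type*} [TopologicalSpace α] [TopologicalSpace β]
    (g : α → β) (x₀ : α) : Prop :=
  ∀ U : Set α, IsOpen U → x₀ ∈ U → ∀ V : Set β, IsOpen V → g x₀ ∈ V →
    ∃ G : Set α, IsOpen G ∧ G.Nonempty ∧ G ⊆ U ∧ ∀ x ∈ G, g x ∈ V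

lemma tLeft_mono {x x' : ↥(Set.Ioo (0:ℝ) 1)} (h : (x:ℝ) ≤ x') : tLeft x ≤ tLeft x' := by
  rcases lt_or_eq_of_le h with h | h
  · exact Prod.Lex.le_iff.mpr (Or.inl (Subtype.mk_lt_mk.mpr h))
  · exact le_of_eq (by simp [tLeft, Subtype.ext h])

lemma tRight_mono {x x' : ↥(Set.Ioo (0:ℝ) 1)} (h : (x:ℝ) ≤ x') : tRight x ≤ tRight x' := by
  rcases lt_or_eq_of_le h with h | h
  · exact Prod.Lex.le_iff.mpr (Or.inl (Subtype.mk_lt_mk.mpr h))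
  · exact le_of_eq (by simp [tRight, Subtype.ext h])

lemma tRight_le_tLeft {x x' : ↥(Set.Ioo (0:ℝ) 1)} (h : (x':ℝ) < x) : tRight x' ≤ tLeft x :=
  Prod.Lex.le_iff.mpr (Or.inl (Subtype.mk_lt_mk.mpr h))

lemma tRight_le_of_not_le {x : ↥(Set.Ioo (0:ℝ) 1)} {y : DoubleArrow}
    (h : ¬ y ≤ tLeft x) : tRight x ≤ y := by
  rw [not_le] at h
  obtain ⟨a, b⟩ := y
  have h' : tLeft x < toLex (a, b) := h
  rcases Prod.Lex.lt_iff.mp h' with h'' | ⟨h1, h2⟩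
  · exact Prod.Lex.le_iff.mpr (Or.inl h'')
  · cases b
    · exact absurd h2 (by simp)
    · exact Prod.Lex.le_iff.mpr (Or.inr ⟨h1, le_rfl⟩)

lemma exists_lt_mem {U : Set ↥(Set.Ioo (0:ℝ) 1)} (hU : IsOpen U)
    {x₀ : ↥(Set.Ioo (0:ℝ) 1)} (hx : x₀ ∈ U) : ∃ x ∈ U, (x:ℝ) < x₀ := by
  obtain ⟨W, hW, rfl⟩ := isOpen_induced_iff.mp hU
  obtain ⟨ε, hε, hball⟩ := Metric.isOpen_iff.mp hW x₀.1 hx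
  have h0 := x₀.2.1
  set δ : ℝ := min (ε/2) (x₀.1/2) with hδ
  have hδ0 : 0 < δ := lt_min (by linarith) (by linarith)
  refine ⟨⟨x₀.1 - δ, ⟨by have := min_le_right (ε/2) (x₀.1/2); linarith, by have := x₀.2.2; linarith⟩⟩, ?_, by simpa using hδ0⟩
  apply hball
  simp only [Metric.mem_ball, Real.dist_eq]
  have : |x₀.1 - δ - x₀.1| = δ := by rw [abs_of_nonpos (by linarith)]; ring
  rw [this]; exact lt_of_le_of_lt (min_le_left _ _) (by linarith)

lemma exists_gt_mem {U : Set ↥(Set.Ioo (0:ℝ) 1)} (hU : IsOpen U)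
    {x₀ : ↥(Set.Ioo (0:ℝ) 1)} (hx : x₀ ∈ U) : ∃ x ∈ U, (x₀:ℝ) < x := by
  obtain ⟨W, hW, rfl⟩ := isOpen_induced_iff.mp hU
  obtain ⟨ε, hε, hball⟩ := Metric.isOpen_iff.mp hW x₀.1 hx
  have h1 := x₀.2.2
  set δ : ℝ := min (ε/2) ((1 - x₀.1)/2) with hδ
  have hδ0 : 0 < δ := lt_min (by linarith) (by linarith)
  refine ⟨⟨x₀.1 + δ, ⟨by have := x₀.2.1; linarith, by have := min_le_right (ε/2) ((1-x₀.1)/2); linarith⟩⟩, ?_, by simpa using hδ0⟩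
  apply hball
  simp only [Metric.mem_ball, Real.dist_eq]
  have : |x₀.1 + δ - x₀.1| = δ := by rw [abs_of_nonneg (by linarith)]; ring
  rw [this]; exact lt_of_le_of_lt (min_le_left _ _) (by linarith)

theorem stmt_10 (f : ↥(Set.Ioo (0:ℝ) 1) → DoubleArrow → ℝ)
    (hf0 : ∀ x y, tRight x ≤ y → f x y = 0)
    (hf1 : ∀ x y, y ≤ tLeft x → f x y = 1) :
    (∀ y : DoubleArrow, ∀ x₀ : ↥(Set.Ioo (0:ℝ) 1),
      QuasicontinuousAt (fun x => f x y) x₀) ∧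
    (∀ x : ↥(Set.Ioo (0:ℝ) 1),
      ¬ ContinuousAt (fun p : ↥(Set.Ioo (0:ℝ) 1) × DoubleArrow => f p.1 p.2) (x, tLeft x) ∧
      ¬ ContinuousAt (fun p : ↥(Set.Ioo (0:ℝ) 1) × DoubleArrow => f p.1 p.2) (x, tRight x)) := by
  constructor
  · intro y x₀ U hU hxU V hV hfV
    by_cases h : y ≤ tLeft x₀
    · -- value 1, go right
      obtain ⟨x₁, hx₁U, hx₁⟩ := exists_gt_mem hU hxU
      refine ⟨U ∩ {x | (x₀:ℝ) < x}, hU.inter (isOpen_induced_iff.mpr ⟨Set.Ioi x₀.1, isOpen_Ioi, rfl⟩),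
        ⟨x₁, hx₁U, hx₁⟩, Set.inter_subset_left, ?_⟩
      intro x ⟨_, hx⟩
      show f x y ∈ V
      rw [hf1 x y (h.trans (tLeft_mono (le_of_lt hx))), ← hf1 x₀ y h]
      exact hfV
    · -- value 0, go left
      have h0 : tRight x₀ ≤ y := tRight_le_of_not_le h
      obtain ⟨x₁, hx₁U, hx₁⟩ := exists_lt_mem hU hxU
      refine ⟨U ∩ {x | (x:ℝ) < x₀}, hU.inter (isOpen_induced_iff.mpr ⟨Set.Iio x₀.1, isOpen_Iio, rfl⟩),
        ⟨x₁, hx₁U, hx₁⟩, Set.inter_subset_left, ?_⟩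
      intro x ⟨_, hx⟩
      show f x y ∈ V
      rw [hf0 x y ((tRight_mono (le_of_lt hx)).trans h0), ← hf0 x₀ y h0]
      exact hfV
  · intro x
    have key : ∀ (y₀ : DoubleArrow) (v : ℝ),
        f x y₀ = v →
        (∀ x' : ↥(Set.Ioo (0:ℝ) 1), ((x':ℝ) < x ∨ (x:ℝ) < x') ∧ True → True) → True := fun _ _ _ _ => trivial
    constructor
    · intro hc
      have hin : ContinuousAt (fun x' : ↥(Set.Ioo (0:ℝ) 1) => (x', tLeft x)) x :=
        continuousAt_id.prodMk continuousAt_const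
      have hc' : ContinuousAt (fun x' => f x' (tLeft x)) x := by exact Filter.Tendsto.comp hc hin
      have hv : f x (tLeft x) = 1 := hf1 x (tLeft x) le_rfl
      have hmem : (fun x' => f x' (tLeft x)) ⁻¹' Set.Ioi (1/2 : ℝ) ∈ nhds x := by
        apply hc'.preimage_mem_nhds
        rw [hv]; exact Ioi_mem_nhds (by norm_num)
      obtain ⟨U, hUsub, hUopen, hxU⟩ := mem_nhds_iff.mp hmem
      obtain ⟨x', hx'U, hx'⟩ := exists_lt_mem hUopen hxU
      have : f x' (tLeft x) = 0 := hf0 x' (tLeft x) (tRight_le_tLeft hx')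
      have := hUsub hx'U
      simp only [Set.mem_preimage, Set.mem_Ioi] at this
      linarith [hf0 x' (tLeft x) (tRight_le_tLeft hx')]
    · intro hc
      have hin : ContinuousAt (fun x' : ↥(Set.Ioo (0:ℝ) 1) => (x', tRight x)) x :=
        continuousAt_id.prodMk continuousAt_const
      have hc' : ContinuousAt (fun x' => f x' (tRight x)) x := by exact Filter.Tendsto.comp hc hin
      have hv : f x (tRight x) = 0 := hf0 x (tRight x) le_rfl
      have hmem : (fun x' => f x' (tRight x)) ⁻¹' Set.Iio (1/2 : ℝ) ∈ nhds x := by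
        apply hc'.preimage_mem_nhds
        rw [hv]; exact Iio_mem_nhds (by norm_num)
      obtain ⟨U, hUsub, hUopen, hxU⟩ := mem_nhds_iff.mp hmem
      obtain ⟨x', hx'U, hx'⟩ := exists_gt_mem hUopen hxU
      have := hUsub hx'U
      simp only [Set.mem_preimage, Set.mem_Iio] at this
      linarith [hf1 x' (tRight x) (tRight_le_tLeft hx')]
end
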